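/- arXiv:2401.05924 — 12 statements merged into one kernel-verified Lean document; each statement's English description precedes it below -/
import Mathlib

section
/- If X is a finite-dimensional idempotent evolution algebra over a field k with natural bases B = {b_1,...,b_n} and B' = {b'_1,...,b'_n}, then there exist nonzero scalars λ_1,...,λ_n in k and a permutation σ of {1,...,n} such that b'_i = λ_i · b_{σ(i)} for all i. -/
/-- **Uniqueness of natural bases** (Elduque–Labra): in a finite-dimensional idempotent
evolution algebra, any two natural bases agree up to nonzero scalings and a permutation. -/
theorem stmt0 {k X : Type*} [Field k] [NonUnitalNonAssocCommRing X]
    [Module k X] [SMulCommClass k X X] [IsScalarTower k X X]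
    {n : ℕ} (b b' : Module.Basis (Fin n) k X)
    (hb : ∀ i j : Fin n, i ≠ j → b i * b j = 0)
    (hb' : ∀ i j : Fin n, i ≠ j → b' i * b' j = 0)
    (hidem : Submodule.span k {z : X | ∃ x y : X, z = x * y} = ⊤) :
    ∃ (lam : Fin n → k) (σ : Equiv.Perm (Fin n)),
      (∀ i, lam i ≠ 0) ∧ ∀ i, b' i = lam i • b (σ i) := by
  classical
  -- product expansion: any product is a combination of the squares of basis vectors
  have hmul : ∀ x y : X,
      x * y = ∑ m : Fin n, (b.repr x m * b.repr y m) • (b m * b m) := by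
    intro x y
    conv_lhs => rw [← b.sum_repr x, ← b.sum_repr y]
    rw [Finset.sum_mul_sum]
    refine Finset.sum_congr rfl fun m _ => ?_
    rw [Finset.sum_eq_single m]
    · rw [smul_mul_assoc, mul_smul_comm, smul_smul]
    · intro l _ hl
      rw [smul_mul_assoc, mul_smul_comm, hb m l (Ne.symm hl), smul_zero, smul_zero]
    · intro h; exact absurd (Finset.mem_univ m) h
  -- the squares form a linearly independent family
  have hfin : Module.Finite k X := Module.Finite.of_basis b
  have hv : LinearIndependent k (fun m : Fin n => b m * b m) := by
    apply linearIndependent_of_top_le_span_of_card_eq_finrank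
    · rw [← hidem, Submodule.span_le]
      rintro z ⟨x, y, rfl⟩
      rw [hmul x y]
      exact Submodule.sum_mem _ fun m _ =>
        Submodule.smul_mem _ _ (Submodule.subset_span ⟨m, rfl⟩)
    · simp [Module.finrank_eq_card_basis b]
  set P : Fin n → Fin n → k := fun i j => b.repr (b' i) j with hP
  -- orthogonality of the rows of P
  have hC : ∀ i j, i ≠ j → ∀ m, P i m * P j m = 0 := by
    intro i j hij m
    have h0 : (∑ m : Fin n, (P i m * P j m) • (b m * b m)) = 0 := by
      rw [hP]; dsimp only; rw [← hmul]; exact hb' i j hij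
    exact Fintype.linearIndependent_iff.mp hv (fun m => P i m * P j m) h0 m
  -- each row of P is nonzero
  have hrow : ∀ i, ∃ m, P i m ≠ 0 := by
    intro i
    by_contra h
    push_neg at h
    have : b' i = 0 := by
      rw [← b.sum_repr (b' i)]
      simp only [hP] at h
      simp [h]
    exact b'.ne_zero i this
  choose σ0 hσ0 using hrow
  have hinj : Function.Injective σ0 := by
    intro i j h
    by_contra hij
    have := hC i j hij (σ0 i)
    rw [h] at this
    rcases mul_eq_zero.mp this with h1 | h1
    · rw [← h] at h1; exact hσ0 i h1
    · exact hσ0 j h1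
  have hbij : Function.Bijective σ0 := Finite.injective_iff_bijective.mp hinj
  -- each row of P has a single nonzero entry
  have hsingle : ∀ i m, m ≠ σ0 i → P i m = 0 := by
    intro i m hm
    obtain ⟨j, rfl⟩ := hbij.2 m
    have hij : i ≠ j := fun h => hm (h ▸ rfl)
    rcases mul_eq_zero.mp (hC i j hij (σ0 j)) with h1 | h1
    · exact h1
    · exact absurd h1 (hσ0 j)
  refine ⟨fun i => P i (σ0 i), Equiv.ofBijective σ0 hbij, fun i => hσ0 i, fun i => ?_⟩
  rw [← b.sum_repr (b' i), Finset.sum_eq_single (σ0 i)]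
  · rfl
  · intro m _ hm
    have := hsingle i m hm
    simp only [hP] at this
    simp [this]
  · intro h; exact absurd (Finset.mem_univ _) h
end

section
/- Let X be an n-dimensional idempotent evolution algebra over a field k, and let B̃_X denote the set of all idempotent natural elements of X (elements x with x² = x that belong to some natural basis of X). Then B̃_X is contained in a single natural basis of X; in particular B̃_X is finite with |B̃_X| ≤ n. -/
/-- `x` is a natural element: it belongs to some natural basis of `X`. -/
def IsNaturalElement {k X : Type*} [Field k] [NonUnitalNonAssocCommRing X]
    [Module k X] (n : ℕ) (x : X) : Prop :=
  ∃ d : Module.Basis (Fin n) k X, (∀ i j : Fin n, i ≠ j → d i * d j = 0) ∧ x ∈ Set.range d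

section AuxEvolution

variable {k X : Type*} [Field k] [NonUnitalNonAssocCommRing X]
    [Module k X] [SMulCommClass k X X] [IsScalarTower k X X]
    {n : ℕ}

private lemma aux_mul_repr_diag (b : Module.Basis (Fin n) k X)
    (hnat : ∀ i j : Fin n, i ≠ j → b i * b j = 0) (x y : X) :
    x * y = ∑ i, (b.repr x i * b.repr y i) • (b i * b i) := by
  conv_lhs => rw [← b.sum_repr x, ← b.sum_repr y]
  rw [Finset.sum_mul]
  refine Finset.sum_congr rfl fun i _ => ?_
  rw [Finset.mul_sum, Finset.sum_eq_single i]
  · rw [smul_mul_assoc, mul_smul_comm, smul_smul]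
  · intro j _ hj
    rw [smul_mul_assoc, mul_smul_comm, hnat i j (Ne.symm hj), smul_zero, smul_zero]
  · intro h; exact absurd (Finset.mem_univ i) h

private lemma aux_squares_li (b : Module.Basis (Fin n) k X)
    (hnat : ∀ i j : Fin n, i ≠ j → b i * b j = 0)
    (hidem : Submodule.span k {z : X | ∃ x y : X, z = x * y} = ⊤) :
    LinearIndependent k (fun i : Fin n => b i * b i) := by
  have hspan : ⊤ ≤ Submodule.span k (Set.range fun i : Fin n => b i * b i) := by
    rw [← hidem]
    refine Submodule.span_le.mpr ?_
    rintro z ⟨x, y, rfl⟩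
    rw [aux_mul_repr_diag b hnat x y]
    exact Submodule.sum_mem _ fun i _ =>
      Submodule.smul_mem _ _ (Submodule.subset_span ⟨i, rfl⟩)
  have hcard : Fintype.card (Fin n) = Module.finrank k X := by
    rw [Module.finrank_eq_card_basis b]
  have := (basisOfTopLeSpanOfCardEqFinrank _ hspan hcard).linearIndependent
  rwa [coe_basisOfTopLeSpanOfCardEqFinrank] at this

/-- In a perfect evolution algebra, every member of a natural basis is a nonzero
scalar multiple of a member of the fixed natural basis `b`. -/
private lemma aux_natural_smul (b : Module.Basis (Fin n) k X)
    (hnat : ∀ i j : Fin n, i ≠ j → b i * b j = 0)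
    (hidem : Submodule.span k {z : X | ∃ x y : X, z = x * y} = ⊤)
    (d : Module.Basis (Fin n) k X)
    (hd : ∀ i j : Fin n, i ≠ j → d i * d j = 0) (j : Fin n) :
    ∃ (i : Fin n) (lam : k), lam ≠ 0 ∧ d j = lam • b i := by
  have hs := aux_squares_li b hnat hidem
  have stepA : ∀ j l : Fin n, j ≠ l → ∀ i : Fin n,
      b.repr (d j) i * b.repr (d l) i = 0 := by
    intro j l hjl i
    have h0 : ∑ i, (b.repr (d j) i * b.repr (d l) i) • (b i * b i) = 0 := by
      rw [← aux_mul_repr_diag b hnat (d j) (d l), hd j l hjl]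
    exact Fintype.linearIndependent_iff.mp hs _ h0 i
  have hne : ∃ i, b.repr (d j) i ≠ 0 := by
    by_contra h
    push_neg at h
    refine d.ne_zero j ?_
    rw [← b.sum_repr (d j)]
    exact Finset.sum_eq_zero fun i _ => by rw [h i, zero_smul]
  obtain ⟨i, hi⟩ := hne
  have huniq : ∀ i', b.repr (d j) i' ≠ 0 → i' = i := by
    intro i' hi'
    by_contra hne'
    have hf : (b.repr (d j) i' • b.coord i - b.repr (d j) i • b.coord i' : X →ₗ[k] k)
        = 0 := by
      apply d.ext
      intro l
      simp only [LinearMap.sub_apply, LinearMap.smul_apply, Module.Basis.coord_apply,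
        smul_eq_mul, LinearMap.zero_apply]
      by_cases hlj : l = j
      · rw [hlj]; ring
      · have e1 : b.repr (d l) i = 0 :=
          (mul_eq_zero.mp (stepA j l (fun h => hlj h.symm) i)).resolve_left hi
        have e2 : b.repr (d l) i' = 0 :=
          (mul_eq_zero.mp (stepA j l (fun h => hlj h.symm) i')).resolve_left hi'
        rw [e1, e2]; ring
    have h2 := LinearMap.congr_fun hf (b i)
    simp only [LinearMap.sub_apply, LinearMap.smul_apply, Module.Basis.coord_apply,
      Module.Basis.repr_self, smul_eq_mul, LinearMap.zero_apply, Finsupp.single_apply] at h2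
    rw [if_pos trivial, if_neg (fun h => hne' h.symm), mul_one, mul_zero, sub_zero] at h2
    exact hi' h2
  refine ⟨i, b.repr (d j) i, hi, ?_⟩
  conv_lhs => rw [← b.sum_repr (d j)]
  refine Finset.sum_eq_single i ?_ ?_
  · intro i' _ hne'
    rw [show b.repr (d j) i' = 0 from by_contra fun h => hne' (huniq i' h), zero_smul]
  · intro h; exact absurd (Finset.mem_univ i) h

/-- Uniqueness of an idempotent nonzero scalar multiple of a basis vector. -/
private lemma aux_idem_unique (b : Module.Basis (Fin n) k X) (i : Fin n)
    {lam1 lam2 : k} (h1 : lam1 ≠ 0) (h2 : lam2 ≠ 0)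
    (e1 : (lam1 • b i) * (lam1 • b i) = lam1 • b i)
    (e2 : (lam2 • b i) * (lam2 • b i) = lam2 • b i) : lam1 = lam2 := by
  have key : ∀ lam : k, lam ≠ 0 → (lam • b i) * (lam • b i) = lam • b i →
      b i * b i = lam⁻¹ • b i := by
    intro lam hl he
    rw [smul_mul_assoc, mul_smul_comm, smul_smul] at he
    have := congrArg (fun z => ((lam * lam)⁻¹ : k) • z) he
    simp only [smul_smul, inv_mul_cancel₀ (mul_ne_zero hl hl), one_smul] at this
    rw [this, show ((lam * lam)⁻¹ * lam : k) = lam⁻¹ by field_simp]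
  have k1 := key lam1 h1 e1
  have k2 := key lam2 h2 e2
  have : (lam1⁻¹ - lam2⁻¹) • b i = 0 := by
    rw [sub_smul, ← k1, ← k2, sub_self]
  rcases smul_eq_zero.mp this with h | h
  · have := sub_eq_zero.mp h
    exact inv_injective this
  · exact absurd h (b.ne_zero i)

end AuxEvolution

/-- The set of all idempotent natural elements of an `n`-dimensional idempotent
evolution algebra is an extending natural family: it is contained in a single
natural basis; in particular it is finite of cardinality at most `n`. -/
theorem stmt3 {k X : Type*} [Field k] [NonUnitalNonAssocCommRing X]
    [Module k X] [SMulCommClass k X X] [IsScalarTower k X X]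
    {n : ℕ} (b : Module.Basis (Fin n) k X)
    (hnat : ∀ i j : Fin n, i ≠ j → b i * b j = 0)
    (hidem : Submodule.span k {z : X | ∃ x y : X, z = x * y} = ⊤) :
    ∃ c : Module.Basis (Fin n) k X, (∀ i j : Fin n, i ≠ j → c i * c j = 0) ∧
      {x : X | x * x = x ∧ IsNaturalElement (k := k) n x} ⊆ Set.range c ∧
      {x : X | x * x = x ∧ IsNaturalElement (k := k) n x}.Finite ∧
      {x : X | x * x = x ∧ IsNaturalElement (k := k) n x}.ncard ≤ n := by
  classical
  set P : Fin n → Prop :=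
    fun i => ∃ lam : k, lam ≠ 0 ∧ (lam • b i) * (lam • b i) = lam • b i with hP
  set mu : Fin n → kˣ := fun i =>
    if h : P i then Units.mk0 h.choose h.choose_spec.1 else 1 with hmu
  have hsub : {x : X | x * x = x ∧ IsNaturalElement (k := k) n x}
      ⊆ Set.range ⇑(b.unitsSMul mu) := by
    rintro x ⟨hx2, d, hd, j, rfl⟩
    obtain ⟨i, lam, hlam, hx⟩ := aux_natural_smul b hnat hidem d hd j
    refine ⟨i, ?_⟩
    have hPi : P i := ⟨lam, hlam, by rw [← hx]; exact hx2⟩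
    have hmui : mu i = Units.mk0 hPi.choose hPi.choose_spec.1 := by
      rw [hmu]; simp only [dif_pos hPi]
    have heq : hPi.choose = lam :=
      aux_idem_unique b i hPi.choose_spec.1 hlam hPi.choose_spec.2
        (by rw [← hx]; exact hx2)
    rw [Module.Basis.unitsSMul_apply, hmui, Units.smul_def, Units.val_mk0, heq, hx]
  refine ⟨b.unitsSMul mu, ?_, hsub, Set.Finite.subset (Set.finite_range _) hsub, ?_⟩
  · intro i j hij
    rw [Module.Basis.unitsSMul_apply, Module.Basis.unitsSMul_apply, Units.smul_def, Units.smul_def,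
      smul_mul_assoc, mul_smul_comm, hnat i j hij, smul_zero, smul_zero]
  · refine le_trans (Set.ncard_le_ncard hsub (Set.finite_range _)) ?_
    rw [← Set.image_univ, ← Finset.coe_univ, ← Finset.coe_image, Set.ncard_coe_finset]
    exact Finset.card_image_le.trans (by simp)
end

section
/- Let X be an n-dimensional idempotent evolution algebra with natural basis {b_1,...,b_n} and structure constants μ_ij, and suppose the permutation group ρ_X(Aut(X)) ≤ S_n is 2-transitive (where ρ_X sends an automorphism φ with φ(b_i) = λ_i b_{σ(i)} to σ). Then either μ_ij = 0 for all i ≠ j, or μ_ij ≠ 0 for all i ≠ j. -/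
/-- If the image of `ρ_X : Aut(X) → Sₙ` is 2-transitive, then either all off-diagonal
structure constants vanish, or none do. -/
theorem stmt4 {k X : Type*} [Field k] [NonUnitalNonAssocCommRing X]
    [Module k X] [SMulCommClass k X X] [IsScalarTower k X X]
    {n : ℕ} (b : Module.Basis (Fin n) k X)
    (hnat : ∀ i j : Fin n, i ≠ j → b i * b j = 0)
    (hidem : Submodule.span k {z : X | ∃ x y : X, z = x * y} = ⊤)
    (μ : Fin n → Fin n → k) (hμ : ∀ i, b i * b i = ∑ j, μ i j • b j)
    (htrans : ∀ i j p q : Fin n, i ≠ j → p ≠ q →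
      ∃ (φ : X ≃ₗ[k] X) (lam : Fin n → k) (σ : Equiv.Perm (Fin n)),
        (∀ x y : X, φ (x * y) = φ x * φ y) ∧ (∀ r, lam r ≠ 0) ∧
        (∀ r, φ (b r) = lam r • b (σ r)) ∧ σ i = p ∧ σ j = q) :
    (∀ i j : Fin n, i ≠ j → μ i j = 0) ∨ (∀ i j : Fin n, i ≠ j → μ i j ≠ 0) := by
  by_cases h0 : ∀ i j : Fin n, i ≠ j → μ i j = 0
  · exact Or.inl h0
  · right
    push_neg at h0
    obtain ⟨i, j, hij, hne⟩ := h0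
    intro p q hpq
    obtain ⟨φ, lam, σ, hmul, hlam, hφb, hsi, hsj⟩ := htrans i j p q hij hpq
    -- key equation: φ (b i * b i) = φ (b i) * φ (b i)
    have key : ∑ m, (μ i m * lam m) • b (σ m)
        = ∑ m, (lam i * lam i * μ p m) • b m := by
      have h1 : φ (b i * b i) = φ (b i) * φ (b i) := hmul _ _
      rw [hμ i, map_sum, hφb] at h1
      simp only [map_smul, hφb, smul_smul] at h1
      rw [smul_mul_smul_comm, hsi, hμ p, Finset.smul_sum] at h1
      simpa [smul_smul] using h1
    -- compare coefficient at q
    have hq := congrArg (fun x => b.repr x q) key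
    simp only [map_sum, map_smul, Module.Basis.repr_self, Finsupp.smul_single,
      Finsupp.coe_finset_sum, Finset.sum_apply, Finsupp.single_apply,
      smul_eq_mul, mul_one] at hq
    rw [Finset.sum_ite_eq' , Finset.sum_eq_single j] at hq
    · simp only [hsj, if_pos rfl, Finset.mem_univ, if_true] at hq
      intro h
      rw [h, mul_zero] at hq
      exact mul_ne_zero hne (hlam j) hq
    · intro m _ hm
      have : σ m ≠ q := fun hc => hm (σ.injective (by rw [hc, hsj]))
      simp [this]
    · intro hj; exact absurd (Finset.mem_univ j) hj
end

section
/- Let X be an n-dimensional idempotent evolution algebra with natural basis {b_1,...,b_n}, structure constants μ_ij, such that ρ_X(Aut(X)) ≤ S_n is transitive and μ_kk ≠ 0 for some k. Then for any automorphism φ with φ(b_i) = λ_i b_{σ(i)}, the scalars are determined by σ: λ_i = μ_ii / μ_{σ(i)σ(i)}. In particular ρ_X is injective. -/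
/-- If `ρ_X(Aut(X))` is transitive and some diagonal structure constant is nonzero,
then the scalars of any automorphism are determined by its permutation:
`λᵢ = μᵢᵢ / μ_{σ(i)σ(i)}`; in particular `ρ_X` is faithful. -/
theorem stmt6 {k X : Type*} [Field k] [NonUnitalNonAssocCommRing X]
    [Module k X] [SMulCommClass k X X] [IsScalarTower k X X]
    {n : ℕ} (b : Module.Basis (Fin n) k X)
    (hnat : ∀ i j : Fin n, i ≠ j → b i * b j = 0)
    (hidem : Submodule.span k {z : X | ∃ x y : X, z = x * y} = ⊤)
    (μ : Fin n → Fin n → k) (hμ : ∀ i, b i * b i = ∑ j, μ i j • b j)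
    (htrans : ∀ i p : Fin n,
      ∃ (φ : X ≃ₗ[k] X) (lam : Fin n → k) (σ : Equiv.Perm (Fin n)),
        (∀ x y : X, φ (x * y) = φ x * φ y) ∧ (∀ r, lam r ≠ 0) ∧
        (∀ r, φ (b r) = lam r • b (σ r)) ∧ σ i = p)
    (hdiag : ∃ i : Fin n, μ i i ≠ 0) :
    (∀ (φ : X ≃ₗ[k] X), (∀ x y : X, φ (x * y) = φ x * φ y) →
      ∀ (lam : Fin n → k) (σ : Equiv.Perm (Fin n)), (∀ r, lam r ≠ 0) →
        (∀ r, φ (b r) = lam r • b (σ r)) →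
        ∀ i, lam i = μ i i / μ (σ i) (σ i)) ∧
    (∀ (φ φ' : X ≃ₗ[k] X), (∀ x y : X, φ (x * y) = φ x * φ y) →
      (∀ x y : X, φ' (x * y) = φ' x * φ' y) →
      ∀ (lam lam' : Fin n → k) (σ : Equiv.Perm (Fin n)),
        (∀ r, lam r ≠ 0) → (∀ r, φ (b r) = lam r • b (σ r)) →
        (∀ r, lam' r ≠ 0) → (∀ r, φ' (b r) = lam' r • b (σ r)) → φ = φ') := by
  -- Key relation: λᵢ μ_{σ(i)σ(i)} = μᵢᵢ
  have key : ∀ (φ : X ≃ₗ[k] X), (∀ x y : X, φ (x * y) = φ x * φ y) →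
      ∀ (lam : Fin n → k) (σ : Equiv.Perm (Fin n)), (∀ r, lam r ≠ 0) →
        (∀ r, φ (b r) = lam r • b (σ r)) →
        ∀ i, lam i * μ (σ i) (σ i) = μ i i := by
    intro φ hmul lam σ hlam hφ i
    have h1 : φ (b i * b i) = ∑ j, (μ i (σ.symm j) * lam (σ.symm j)) • b j := by
      rw [hμ, map_sum]
      simp_rw [map_smul, hφ, smul_smul]
      rw [← Equiv.sum_comp σ (fun j => (μ i (σ.symm j) * lam (σ.symm j)) • b j)]
      simp
    have h2 : φ (b i * b i) = ∑ j, (lam i * lam i * μ (σ i) j) • b j := by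
      rw [hmul, hφ, smul_mul_smul_comm, hμ, Finset.smul_sum]
      simp_rw [smul_smul]
    have h3 := h1.symm.trans h2
    have h4 := congrArg (fun z => b.repr z (σ i)) h3
    simp only [map_sum, map_smul, Module.Basis.repr_self, Finsupp.smul_single, smul_eq_mul,
      mul_one, Finsupp.coe_finset_sum, Finset.sum_apply, Finsupp.single_apply,
      Finset.sum_ite_eq', Finset.mem_univ, if_true, Equiv.symm_apply_apply] at h4
    -- h4 : μ i i * lam i = lam i * lam i * μ (σ i) (σ i)
    exact mul_left_cancel₀ (hlam i) (by linear_combination -h4)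
  -- all diagonal entries are nonzero
  obtain ⟨i0, hi0⟩ := hdiag
  have alldiag : ∀ p, μ p p ≠ 0 := by
    intro p
    obtain ⟨φ, lam, σ, hmul, hlam, hφ, hσ⟩ := htrans i0 p
    have := key φ hmul lam σ hlam hφ i0
    rw [hσ] at this
    intro h
    rw [h, mul_zero] at this
    exact hi0 this.symm
  constructor
  · intro φ hmul lam σ hlam hφ i
    have h := key φ hmul lam σ hlam hφ i
    rw [eq_div_iff (alldiag (σ i))]
    exact h
  · intro φ φ' hmul hmul' lam lam' σ hlam hφ hlam' hφ'
    have h1 := key φ hmul lam σ hlam hφ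
    have h2 := key φ' hmul' lam' σ hlam' hφ'
    have hll : ∀ r, lam r = lam' r := by
      intro r
      have := (h1 r).trans (h2 r).symm
      exact mul_right_cancel₀ (alldiag (σ r)) this
    have : (φ : X →ₗ[k] X) = (φ' : X →ₗ[k] X) := by
      apply b.ext
      intro r
      simp [hφ r, hφ' r, hll r]
    exact LinearEquiv.toLinearMap_injective this
end

section
/- Let n ≥ 3 and let X be an n-dimensional idempotent evolution algebra with natural basis {b_1,...,b_n} and structure constants μ_ij such that ρ_X(Aut(X)) ≤ S_n is 2-transitive and μ_ij ≠ 0 for some i ≠ j. Then for any automorphism φ with associated scalars λ_i and permutation σ, and any triple of pairwise distinct indices (i,j,k), one has λ_i = (μ_ik/μ_{σ(i)σ(k)}) · (μ_{σ(j)σ(k)}/μ_jk) · (μ_ji/μ_{σ(j)σ(i)}). In particular ρ_X is injective. -/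
/-- For `n ≥ 3`, if `ρ_X(Aut(X))` is 2-transitive and some off-diagonal structure
constant is nonzero, then the scalars of any automorphism are given by the explicit
formula `λᵢ = (μᵢₖ/μ_{σ(i)σ(k)})(μ_{σ(j)σ(k)}/μⱼₖ)(μⱼᵢ/μ_{σ(j)σ(i)})` for any triple of
pairwise distinct indices `(i,j,k)`; in particular `ρ_X` is faithful. -/
theorem stmt7 {k X : Type*} [Field k] [NonUnitalNonAssocCommRing X]
    [Module k X] [SMulCommClass k X X] [IsScalarTower k X X]
    {n : ℕ} (hn : 3 ≤ n) (b : Module.Basis (Fin n) k X)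
    (hnat : ∀ i j : Fin n, i ≠ j → b i * b j = 0)
    (hidem : Submodule.span k {z : X | ∃ x y : X, z = x * y} = ⊤)
    (μ : Fin n → Fin n → k) (hμ : ∀ i, b i * b i = ∑ j, μ i j • b j)
    (htrans : ∀ i j p q : Fin n, i ≠ j → p ≠ q →
      ∃ (φ : X ≃ₗ[k] X) (lam : Fin n → k) (σ : Equiv.Perm (Fin n)),
        (∀ x y : X, φ (x * y) = φ x * φ y) ∧ (∀ r, lam r ≠ 0) ∧
        (∀ r, φ (b r) = lam r • b (σ r)) ∧ σ i = p ∧ σ j = q)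
    (hoff : ∃ i j : Fin n, i ≠ j ∧ μ i j ≠ 0) :
    (∀ (φ : X ≃ₗ[k] X), (∀ x y : X, φ (x * y) = φ x * φ y) →
      ∀ (lam : Fin n → k) (σ : Equiv.Perm (Fin n)), (∀ r, lam r ≠ 0) →
        (∀ r, φ (b r) = lam r • b (σ r)) →
        ∀ i j l : Fin n, i ≠ j → j ≠ l → i ≠ l →
          lam i = (μ i l / μ (σ i) (σ l)) * (μ (σ j) (σ l) / μ j l) *
            (μ j i / μ (σ j) (σ i))) ∧
    (∀ (φ φ' : X ≃ₗ[k] X), (∀ x y : X, φ (x * y) = φ x * φ y) →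
      (∀ x y : X, φ' (x * y) = φ' x * φ' y) →
      ∀ (lam lam' : Fin n → k) (σ : Equiv.Perm (Fin n)),
        (∀ r, lam r ≠ 0) → (∀ r, φ (b r) = lam r • b (σ r)) →
        (∀ r, lam' r ≠ 0) → (∀ r, φ' (b r) = lam' r • b (σ r)) → φ = φ') := by
  classical
  -- Key relation: comparing coefficients in φ(bᵢ²) = φ(bᵢ)².
  have key : ∀ (φ : X ≃ₗ[k] X), (∀ x y : X, φ (x * y) = φ x * φ y) →
      ∀ (lam : Fin n → k) (σ : Equiv.Perm (Fin n)),
        (∀ r, φ (b r) = lam r • b (σ r)) →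
        ∀ i j : Fin n, lam i ^ 2 * μ (σ i) (σ j) = μ i j * lam j := by
    intro φ hm lam σ hb i j
    have h1 : φ (b i * b i) = ∑ l, (lam i ^ 2 * μ (σ i) l) • b l := by
      rw [hm, hb, smul_mul_smul_comm, hμ, Finset.smul_sum]
      simp [smul_smul, sq]
    have h2 : φ (b i * b i) = ∑ l, (μ i (σ.symm l) * lam (σ.symm l)) • b l := by
      rw [hμ, map_sum]
      rw [← Equiv.sum_comp σ (fun l => (μ i (σ.symm l) * lam (σ.symm l)) • b l)]
      refine Finset.sum_congr rfl fun j' _ => ?_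
      rw [map_smul, hb]
      simp [smul_smul]
    have h3 := h1.symm.trans h2
    have h4 : (fun l => lam i ^ 2 * μ (σ i) l)
        = (fun l => μ i (σ.symm l) * lam (σ.symm l)) := by
      rw [← Module.Basis.repr_sum_self b (fun l => lam i ^ 2 * μ (σ i) l),
        ← Module.Basis.repr_sum_self b (fun l => μ i (σ.symm l) * lam (σ.symm l)), h3]
    have h5 := congrFun h4 (σ j)
    simpa using h5
  -- All off-diagonal structure constants are nonzero.
  have hall : ∀ p q : Fin n, p ≠ q → μ p q ≠ 0 := by
    intro p q hpq
    obtain ⟨i0, j0, hij, hμ0⟩ := hoff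
    obtain ⟨φ, lam, σ, hm, hl, hb, hp, hq⟩ := htrans i0 j0 p q hij hpq
    have := key φ hm lam σ hb i0 j0
    rw [hp, hq] at this
    intro h0
    rw [h0, mul_zero] at this
    exact mul_ne_zero hμ0 (hl j0) this.symm
  have formula : ∀ (φ : X ≃ₗ[k] X), (∀ x y : X, φ (x * y) = φ x * φ y) →
      ∀ (lam : Fin n → k) (σ : Equiv.Perm (Fin n)), (∀ r, lam r ≠ 0) →
        (∀ r, φ (b r) = lam r • b (σ r)) →
        ∀ i j l : Fin n, i ≠ j → j ≠ l → i ≠ l →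
          lam i = (μ i l / μ (σ i) (σ l)) * (μ (σ j) (σ l) / μ j l) *
            (μ j i / μ (σ j) (σ i)) := by
    intro φ hm lam σ hl hb i j l hij hjl hil
    have e1 := key φ hm lam σ hb i l
    have e2 := key φ hm lam σ hb j l
    have e3 := key φ hm lam σ hb j i
    have ha : μ (σ i) (σ l) ≠ 0 := hall _ _ (fun h => hil (σ.injective h))
    have hc : μ (σ j) (σ l) ≠ 0 := hall _ _ (fun h => hjl (σ.injective h))
    have hd : μ (σ j) (σ i) ≠ 0 := hall _ _ (fun h => hij.symm (σ.injective h))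
    have hq : μ j l ≠ 0 := hall _ _ hjl
    have hli : lam i ≠ 0 := hl i
    have hll : lam l ≠ 0 := hl l
    have hlj : lam j ≠ 0 := hl j
    have H : (lam i * (μ (σ i) (σ l) * (μ j l * μ (σ j) (σ i)))) * (lam j ^ 2 * lam l)
        = (μ i l * (μ (σ j) (σ l) * μ j i)) * (lam j ^ 2 * lam l) := by
      linear_combination (μ (σ j) (σ l) * μ j i * lam j ^ 2) * e1
        - (lam i * μ (σ i) (σ l) * μ (σ j) (σ i) * lam j ^ 2) * e2
        + (μ (σ i) (σ l) * μ (σ j) (σ l) * lam i * lam j ^ 2) * e3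
    have H2 := mul_right_cancel₀ (mul_ne_zero (pow_ne_zero 2 hlj) hll) H
    field_simp
    linear_combination H2
  refine ⟨formula, ?_⟩
  intro φ φ' hm hm' lam lam' σ hl hb hl' hb'
  -- pick, for each i, indices j l with i,j,l pairwise distinct
  have hlam : ∀ i, lam i = lam' i := by
    intro i
    obtain ⟨j, -, hji⟩ := Finset.exists_mem_ne
      (s := (Finset.univ : Finset (Fin n)) \ {i}) (by
        rw [Finset.card_sdiff_of_subset (by simp)]
        simp only [Finset.card_univ, Fintype.card_fin, Finset.card_singleton]
        omega) i
    obtain ⟨l, hlmem, hlj⟩ := Finset.exists_mem_ne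
      (s := (Finset.univ : Finset (Fin n)) \ {i}) (by
        rw [Finset.card_sdiff_of_subset (by simp)]
        simp only [Finset.card_univ, Fintype.card_fin, Finset.card_singleton]
        omega) j
    have hli : l ≠ i := by
      simp only [Finset.mem_sdiff, Finset.mem_singleton] at hlmem
      exact hlmem.2
    rw [formula φ hm lam σ hl hb i j l hji.symm hlj.symm hli.symm,
      formula φ' hm' lam' σ hl' hb' i j l hji.symm hlj.symm hli.symm]
  have hφb : ∀ r, φ (b r) = φ' (b r) := by
    intro r; rw [hb, hb', hlam]
  exact LinearEquiv.toLinearMap_injective (b.ext hφb)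
end

section
/- Let X be an n-dimensional idempotent evolution algebra (n ≥ 3) over a field k such that ρ_X(Aut(X)) ≤ S_n is 2-transitive. Then ρ_X: Aut(X) → S_n is injective, i.e., Aut(X) ≅ ρ_X(Aut(X)). -/
section Aux

variable {k X : Type*} [Field k] [NonUnitalNonAssocCommRing X]
    [Module k X] [SMulCommClass k X X] [IsScalarTower k X X]
    {n : ℕ} (b : Module.Basis (Fin n) k X)

lemma aux_mul_expand (hnat : ∀ i j : Fin n, i ≠ j → b i * b j = 0) (x y : X) :
    x * y = ∑ i, (b.repr x i * b.repr y i) • (b i * b i) := by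
  conv_lhs => rw [← b.sum_repr x, ← b.sum_repr y]
  rw [Finset.sum_mul_sum]
  refine Finset.sum_congr rfl fun i _ => ?_
  rw [Finset.sum_eq_single i]
  · rw [smul_mul_smul_comm]
  · intro j _ hji
    rw [smul_mul_smul_comm, hnat i j (Ne.symm hji), smul_zero]
  · intro h; exact absurd (Finset.mem_univ i) h

lemma aux_col_ne (hnat : ∀ i j : Fin n, i ≠ j → b i * b j = 0)
    (hidem : Submodule.span k {z : X | ∃ x y : X, z = x * y} = ⊤) (j : Fin n) :
    ∃ i, b.repr (b i * b i) j ≠ 0 := by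
  by_contra h
  push_neg at h
  have hz : ∀ z ∈ Submodule.span k {z : X | ∃ x y : X, z = x * y},
      b.coord j z = 0 := by
    intro z hzmem
    induction hzmem using Submodule.span_induction with
    | mem z hz =>
      obtain ⟨x, y, rfl⟩ := hz
      rw [aux_mul_expand b hnat x y, map_sum]
      refine Finset.sum_eq_zero fun i _ => ?_
      rw [map_smul]
      have : (b.coord j) (b i * b i) = 0 := h i
      rw [this, smul_zero]
    | zero => simp
    | add x y _ _ hx hy => rw [map_add, hx, hy, add_zero]
    | smul a x _ hx => rw [map_smul, hx, smul_zero]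
  have : b.coord j (b j) = 0 := hz (b j) (hidem ▸ Submodule.mem_top)
  simp at this

lemma aux_rel (hnat : ∀ i j : Fin n, i ≠ j → b i * b j = 0)
    (φ : X ≃ₗ[k] X) (lam : Fin n → k) (σ : Equiv.Perm (Fin n))
    (hφ : ∀ x y : X, φ (x * y) = φ x * φ y)
    (hφb : ∀ r, φ (b r) = lam r • b (σ r)) (r s : Fin n) :
    (lam r * lam r) * b.repr (b (σ r) * b (σ r)) (σ s)
      = b.repr (b r * b r) s * lam s := by
  have h1 : φ (b r * b r) = (lam r * lam r) • (b (σ r) * b (σ r)) := by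
    rw [hφ, hφb, smul_mul_smul_comm]
  have h2 : b r * b r = ∑ s, b.repr (b r * b r) s • b s := (b.sum_repr _).symm
  have h3 : φ (b r * b r) = ∑ t, b.repr (b r * b r) t • (lam t • b (σ t)) := by
    conv_lhs => rw [h2]
    rw [map_sum]
    exact Finset.sum_congr rfl fun t _ => by rw [map_smul, hφb]
  have hL : b.repr (φ (b r * b r)) (σ s)
      = (lam r * lam r) * b.repr (b (σ r) * b (σ r)) (σ s) := by
    rw [h1, map_smul, Finsupp.smul_apply, smul_eq_mul]
  have hR : b.repr (φ (b r * b r)) (σ s) = b.repr (b r * b r) s * lam s := by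
    rw [h3, map_sum, Finset.sum_apply']
    rw [Finset.sum_eq_single s]
    · rw [map_smul, map_smul, Finsupp.smul_apply, Finsupp.smul_apply,
        b.repr_self, Finsupp.single_apply, if_pos rfl]
      simp [mul_comm]
    · intro t _ hts
      rw [map_smul, map_smul, Finsupp.smul_apply, Finsupp.smul_apply,
        b.repr_self, Finsupp.single_apply,
        if_neg (fun h => hts (σ.injective h))]
      simp
    · intro h; exact absurd (Finset.mem_univ s) h
  rw [← hL, hR]

end Aux

/-- Theorem A(i): for `n ≥ 3`, if `ρ_X(Aut(X)) ≤ Sₙ` is 2-transitive then `ρ_X` is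
faithful: two automorphisms inducing the same permutation of the natural basis lines
coincide. -/
theorem stmt8 {k X : Type*} [Field k] [NonUnitalNonAssocCommRing X]
    [Module k X] [SMulCommClass k X X] [IsScalarTower k X X]
    {n : ℕ} (hn : 3 ≤ n) (b : Module.Basis (Fin n) k X)
    (hnat : ∀ i j : Fin n, i ≠ j → b i * b j = 0)
    (hidem : Submodule.span k {z : X | ∃ x y : X, z = x * y} = ⊤)
    (htrans : ∀ i j p q : Fin n, i ≠ j → p ≠ q →
      ∃ (φ : X ≃ₗ[k] X) (lam : Fin n → k) (σ : Equiv.Perm (Fin n)),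
        (∀ x y : X, φ (x * y) = φ x * φ y) ∧ (∀ r, lam r ≠ 0) ∧
        (∀ r, φ (b r) = lam r • b (σ r)) ∧ σ i = p ∧ σ j = q) :
    ∀ (φ φ' : X ≃ₗ[k] X), (∀ x y : X, φ (x * y) = φ x * φ y) →
      (∀ x y : X, φ' (x * y) = φ' x * φ' y) →
      ∀ (lam lam' : Fin n → k) (σ : Equiv.Perm (Fin n)),
        (∀ r, lam r ≠ 0) → (∀ r, φ (b r) = lam r • b (σ r)) →
        (∀ r, lam' r ≠ 0) → (∀ r, φ' (b r) = lam' r • b (σ r)) → φ = φ' := by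
  intro φ φ' hφ hφ' lam lam' σ hlam hφb hlam' hφ'b
  set c : Fin n → Fin n → k := fun i j => b.repr (b i * b i) j with hcdef
  set μ : Fin n → k := fun r => lam r / lam' r with hμdef
  have hμne : ∀ r, μ r ≠ 0 := fun r => div_ne_zero (hlam r) (hlam' r)
  have hrel : ∀ r s : Fin n, c r s ≠ 0 → μ s = μ r * μ r := by
    intro r s hc
    have h1 := aux_rel b hnat φ lam σ hφ hφb r s
    have h2 := aux_rel b hnat φ' lam' σ hφ' hφ'b r s
    set D := b.repr (b (σ r) * b (σ r)) (σ s) with hD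
    have hcσ : D ≠ 0 := by
      intro h0
      rw [h0, mul_zero] at h1
      rcases mul_eq_zero.1 h1.symm with h | h
      · exact hc h
      · exact hlam s h
    have key : D * (lam s * (lam' r * lam' r)) = D * ((lam r * lam r) * lam' s) := by
      have h1' : lam r * lam r * D = c r s * lam s := h1
      have h2' : lam' r * lam' r * D = c r s * lam' s := h2
      linear_combination lam s * h2' - lam' s * h1'
    have key2 : lam s * (lam' r * lam' r) = (lam r * lam r) * lam' s :=
      mul_left_cancel₀ hcσ key
    show lam s / lam' s = lam r / lam' r * (lam r / lam' r)
    rw [div_mul_div_comm, div_eq_div_iff (hlam' s) (mul_ne_zero (hlam' r) (hlam' r))]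
    linear_combination key2
  have hcol : ∀ j, ∃ i, c i j ≠ 0 := aux_col_ne b hnat hidem
  have hsupp : ∀ p q i j : Fin n, p ≠ q → i ≠ j → c i j ≠ 0 → c p q ≠ 0 := by
    intro p q i j hpq hij hcij
    obtain ⟨ψ, m, τ, hψ, hm, hψb, hτp, hτq⟩ := htrans p q i j hpq hij
    have h := aux_rel b hnat ψ m τ hψ hψb p q
    rw [hτp, hτq] at h
    intro h0
    rw [show b.repr (b p * b p) q = c p q from rfl, h0, zero_mul] at h
    rcases mul_eq_zero.1 h with h' | h'
    · exact (mul_ne_zero (hm p) (hm p)) h'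
    · exact hcij h'
  have cancel : ∀ r : Fin n, μ r = μ r * μ r → μ r = 1 := by
    intro r h
    have : μ r * 1 = μ r * μ r := by rw [mul_one]; exact h
    exact (mul_left_cancel₀ (hμne r) this).symm
  have hμ1 : ∀ r, μ r = 1 := by
    by_cases hoff : ∃ i j : Fin n, i ≠ j ∧ c i j ≠ 0
    · obtain ⟨i0, j0, hij0, hc0⟩ := hoff
      have hall : ∀ p q : Fin n, p ≠ q → μ q = μ p * μ p := fun p q hpq =>
        hrel p q (hsupp p q i0 j0 hpq hij0 hc0)
      intro r
      obtain ⟨s, t, hrs, hrt, hst⟩ : ∃ s t : Fin n, r ≠ s ∧ r ≠ t ∧ s ≠ t := by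
        have h1 : 1 < Fintype.card (Fin n) := by simp; omega
        obtain ⟨s, hs⟩ := Fintype.exists_ne_of_one_lt_card h1 r
        have h2 : ({r, s} : Finset (Fin n)).card < Fintype.card (Fin n) := by
          have := Finset.card_insert_le r ({s} : Finset (Fin n))
          simp only [Finset.card_singleton, Fintype.card_fin] at this ⊢
          omega
        obtain ⟨t, ht⟩ := Finset.card_pos.1 (show 0 < ({r, s} : Finset (Fin n))ᶜ.card by
          rw [Finset.card_compl]
          omega)
        rw [Finset.mem_compl] at ht
        simp only [Finset.mem_insert, Finset.mem_singleton, not_or] at ht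
        exact ⟨s, t, Ne.symm hs, fun h => ht.1 h.symm, fun h => ht.2 h.symm⟩
      have h1 : μ s = μ r * μ r := hall r s hrs
      have h2 : μ t = μ r * μ r := hall r t hrt
      have h3 : μ s = μ t * μ t := hall t s (Ne.symm hst)
      have h4 : μ r = μ s * μ s := hall s r (Ne.symm hrs)
      have hts : μ t = μ s := by rw [h2, ← h1]
      have hs1 : μ s = 1 := cancel s (by
        calc μ s = μ t * μ t := h3
          _ = μ s * μ s := by rw [hts])
      rw [h4, hs1, mul_one]
    · push_neg at hoff
      intro r
      obtain ⟨i, hi⟩ := hcol r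
      have hir : i = r := by
        by_contra hir
        exact hi (hoff i r hir)
      rw [hir] at hi
      exact cancel r (hrel r r hi)
  have hlameq : ∀ r, lam r = lam' r := by
    intro r
    have h := hμ1 r
    rw [hμdef] at h
    exact (div_eq_one_iff_eq (hlam' r)).1 h
  refine LinearEquiv.toLinearMap_injective (b.ext fun r => ?_)
  simp only [LinearEquiv.coe_coe]
  rw [hφb, hφ'b, hlameq]
end

section
/- Let X be an n-dimensional idempotent evolution algebra over a field k whose structure matrix relative to some natural basis has a nonzero diagonal entry. If ρ_X(Aut(X)) ≤ S_n is 2-transitive, then ρ_X(Aut(X)) = S_n. -/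
/-- Key coefficient relation satisfied by any evolution-algebra automorphism. -/
theorem stmt9_aux {k X : Type*} [Field k] [NonUnitalNonAssocCommRing X]
    [Module k X] [SMulCommClass k X X] [IsScalarTower k X X]
    {n : ℕ} (b : Module.Basis (Fin n) k X)
    (μ : Fin n → Fin n → k) (hμ : ∀ i, b i * b i = ∑ j, μ i j • b j)
    (φ : X ≃ₗ[k] X) (lam : Fin n → k) (σ : Equiv.Perm (Fin n))
    (hmul : ∀ x y : X, φ (x * y) = φ x * φ y)
    (hb : ∀ r, φ (b r) = lam r • b (σ r)) :
    ∀ r s, μ (σ r) (σ s) * lam r ^ 2 = μ r s * lam s := by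
  intro r s
  have h0 : φ (b r * b r) = φ (b r) * φ (b r) := hmul _ _
  rw [hμ r, hb r, map_sum, smul_mul_assoc, mul_smul_comm, hμ (σ r), smul_smul] at h0
  simp only [map_smul, hb] at h0
  have h1 := congrArg (fun z => b.repr z (σ s)) h0
  simp only [map_sum, map_smul, Finset.sum_apply', Module.Basis.repr_self, Finsupp.smul_apply,
    smul_eq_mul, Finsupp.single_apply, EmbeddingLike.apply_eq_iff_eq, mul_ite, mul_one,
    mul_zero, Finset.sum_ite_eq', Finset.mem_univ, if_true] at h1
  -- h1 : μ r s * lam s = lam r * lam r * μ (σ r) (σ s)  (up to arrangement)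
  linear_combination -h1

/-- If the structure matrix has a nonzero diagonal entry and `ρ_X(Aut(X))` is
2-transitive, then `ρ_X(Aut(X)) = Sₙ`: every permutation is induced by an automorphism. -/
theorem stmt9 {k X : Type*} [Field k] [NonUnitalNonAssocCommRing X]
    [Module k X] [SMulCommClass k X X] [IsScalarTower k X X]
    {n : ℕ} (b : Module.Basis (Fin n) k X)
    (hnat : ∀ i j : Fin n, i ≠ j → b i * b j = 0)
    (hidem : Submodule.span k {z : X | ∃ x y : X, z = x * y} = ⊤)
    (μ : Fin n → Fin n → k) (hμ : ∀ i, b i * b i = ∑ j, μ i j • b j)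
    (hdiag : ∃ i : Fin n, μ i i ≠ 0)
    (htrans : ∀ i j p q : Fin n, i ≠ j → p ≠ q →
      ∃ (φ : X ≃ₗ[k] X) (lam : Fin n → k) (σ : Equiv.Perm (Fin n)),
        (∀ x y : X, φ (x * y) = φ x * φ y) ∧ (∀ r, lam r ≠ 0) ∧
        (∀ r, φ (b r) = lam r • b (σ r)) ∧ σ i = p ∧ σ j = q) :
    ∀ τ : Equiv.Perm (Fin n),
      ∃ (φ : X ≃ₗ[k] X) (lam : Fin n → k),
        (∀ x y : X, φ (x * y) = φ x * φ y) ∧ (∀ r, lam r ≠ 0) ∧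
        (∀ r, φ (b r) = lam r • b (τ r)) := by
  intro τ
  rcases Nat.lt_or_ge n 2 with hn | hn
  · -- trivial case: Fin n is a subsingleton, so τ = id
    haveI : Subsingleton (Fin n) := ⟨fun a c => Fin.ext (by omega)⟩
    refine ⟨LinearEquiv.refl k X, fun _ => 1, fun x y => rfl, fun r => one_ne_zero, fun r => ?_⟩
    have hτ : τ r = r := Subsingleton.elim _ _
    rw [hτ, one_smul]; rfl
  · haveI : Nontrivial (Fin n) := Fin.nontrivial_iff_two_le.mpr hn
    obtain ⟨i0, hi0⟩ := hdiag
    -- Step 1: all diagonal entries are nonzero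
    have hdiagall : ∀ p, μ p p ≠ 0 := by
      intro p hpp
      obtain ⟨j, hj⟩ := exists_ne i0
      obtain ⟨q, hq⟩ := exists_ne p
      obtain ⟨φ, lam, σ, hm, hl, hbr, hσi, hσj⟩ := htrans i0 j p q (Ne.symm hj) (Ne.symm hq)
      have hA := stmt9_aux b μ hμ φ lam σ hm hbr i0 i0
      rw [hσi, hpp] at hA
      have hA' : μ i0 i0 * lam i0 = 0 := by linear_combination hA.symm
      rcases mul_eq_zero.mp hA' with h | h
      · exact hi0 h
      · exact hl i0 h
    obtain ⟨j0, hj0ne⟩ := exists_ne i0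
    -- Step 2: 2-transitivity forces μ r s * μ s s / μ r r ^ 2 constant off-diagonal
    have hconst : ∀ r s, r ≠ s →
        μ r s * μ s s * μ i0 i0 ^ 2 = μ i0 j0 * μ j0 j0 * μ r r ^ 2 := by
      intro r s hrs
      obtain ⟨φ, lam, σ, hm, hl, hbr, hσi, hσj⟩ := htrans i0 j0 r s (Ne.symm hj0ne) hrs
      have e1 := stmt9_aux b μ hμ φ lam σ hm hbr i0 j0
      have e2 := stmt9_aux b μ hμ φ lam σ hm hbr i0 i0
      have e3 := stmt9_aux b μ hμ φ lam σ hm hbr j0 j0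
      rw [hσi, hσj] at e1
      rw [hσi] at e2
      rw [hσj] at e3
      have e2' : μ r r * lam i0 = μ i0 i0 :=
        mul_right_cancel₀ (hl i0) (by linear_combination e2)
      have e3' : μ s s * lam j0 = μ j0 j0 :=
        mul_right_cancel₀ (hl j0) (by linear_combination e3)
      linear_combination (μ r r ^ 2 * μ s s) * e1
        - μ r s * μ s s * (μ r r * lam i0 + μ i0 i0) * e2'
        + μ i0 j0 * μ r r ^ 2 * e3'
    -- Step 3: key relation for the arbitrary permutation τ
    have key : ∀ r s, μ (τ r) (τ s) * μ (τ s) (τ s) * μ r r ^ 2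
        = μ r s * μ s s * μ (τ r) (τ r) ^ 2 := by
      intro r s
      by_cases hrs : r = s
      · subst hrs; ring
      · have h1 := hconst r s hrs
        have h2 := hconst (τ r) (τ s) (fun h => hrs (τ.injective h))
        have hns : μ i0 i0 ^ 2 ≠ 0 := pow_ne_zero _ (hdiagall i0)
        apply mul_right_cancel₀ hns
        linear_combination μ r r ^ 2 * h2 - μ (τ r) (τ r) ^ 2 * h1
    · -- construct the automorphism
      set lam : Fin n → k := fun r => μ r r / μ (τ r) (τ r) with hlam
      have hlamne : ∀ r, lam r ≠ 0 := fun r => div_ne_zero (hdiagall r) (hdiagall (τ r))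
      have hrel : ∀ r s, μ (τ r) (τ s) * lam r ^ 2 = μ r s * lam s := by
        intro r s
        rw [hlam]
        field_simp [hdiagall (τ r), hdiagall (τ s)]
        linear_combination key r s
      let f : X →ₗ[k] X := b.constr k (fun r => lam r • b (τ r))
      let g : X →ₗ[k] X := b.constr k (fun r => (lam (τ.symm r))⁻¹ • b (τ.symm r))
      have hfb : ∀ r, f (b r) = lam r • b (τ r) := fun r => b.constr_basis k _ r
      have hgb : ∀ r, g (b r) = (lam (τ.symm r))⁻¹ • b (τ.symm r) :=
        fun r => b.constr_basis k _ r
      have hfg : f.comp g = LinearMap.id := by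
        apply b.ext; intro r
        simp only [LinearMap.comp_apply, LinearMap.id_apply, hgb, map_smul, hfb,
          Equiv.apply_symm_apply, smul_smul]
        rw [inv_mul_cancel₀ (hlamne (τ.symm r)), one_smul]
      have hgf : g.comp f = LinearMap.id := by
        apply b.ext; intro r
        simp only [LinearMap.comp_apply, LinearMap.id_apply, hfb, map_smul, hgb,
          Equiv.symm_apply_apply, smul_smul]
        rw [mul_inv_cancel₀ (hlamne r), one_smul]
      let φ : X ≃ₗ[k] X := LinearEquiv.ofLinear f g hfg hgf
      have hφb : ∀ r, φ (b r) = lam r • b (τ r) := hfb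
      have hmb : ∀ i j, f (b i * b j) = f (b i) * f (b j) := by
        intro i j
        by_cases hij : i = j
        · subst hij
          rw [hμ i, map_sum, hfb i, smul_mul_assoc, mul_smul_comm, hμ (τ i), smul_smul,
            ← Equiv.sum_comp τ (fun j => μ (τ i) j • b j), Finset.smul_sum]
          refine Finset.sum_congr rfl fun s _ => ?_
          rw [map_smul, hfb s, smul_smul, smul_smul]
          congr 1
          linear_combination -(hrel i s)
        · rw [hnat i j hij, map_zero, hfb i, hfb j, smul_mul_assoc, mul_smul_comm,
            hnat (τ i) (τ j) (fun h => hij (τ.injective h)), smul_zero, smul_zero]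
      have hmul : ∀ x y : X, φ (x * y) = φ x * φ y := by
        have hext : (LinearMap.mul k X).compr₂ f
            = (LinearMap.mul k X).compl₁₂ f f := by
          apply b.ext; intro i
          apply b.ext; intro j
          simpa [LinearMap.compr₂_apply, LinearMap.compl₁₂_apply, LinearMap.mul_apply']
            using hmb i j
        intro x y
        have := LinearMap.congr_fun (LinearMap.congr_fun hext x) y
        exact (by simpa [LinearMap.compr₂_apply, LinearMap.compl₁₂_apply, LinearMap.mul_apply']
          using this : f (x * y) = f x * f y)
      exact ⟨φ, lam, hmul, hlamne, hφb⟩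
end

section
/- Let n ≥ 5 and let X be an n-dimensional idempotent evolution algebra over a field k such that ρ_X(Aut(X)) ≤ S_n is 4-transitive. Then ρ_X is injective and surjective onto S_n, so ρ_X induces an isomorphism Aut(X) ≅ S_n. -/
set_option maxHeartbeats 2000000
namespace Stmt10Aux
variable {k : Type*} [Field k] {n : ℕ}

lemma inj4' {a b c d : Fin n} (hab : a ≠ b) (hac : a ≠ c) (had : a ≠ d)
    (hbc : b ≠ c) (hbd : b ≠ d) (hcd : c ≠ d) : Function.Injective ![a, b, c, d] := by
  intro i j hij
  fin_cases i <;> fin_cases j <;> simp_all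

/-- `Rel c σ lam`: the compatibility relation between structure constants and a
weighted permutation. -/
def Rel (c : Fin n → Fin n → k) (σ : Equiv.Perm (Fin n)) (lam : Fin n → k) : Prop :=
  ∀ i l, c i l * lam l = lam i ^ 2 * c (σ i) (σ l)

/-- hypothesis: 4-transitive family of realized permutations -/
def T4 (c : Fin n → Fin n → k) : Prop :=
  ∀ x y : Fin 4 → Fin n, Function.Injective x → Function.Injective y →
    ∃ (σ : Equiv.Perm (Fin n)) (lam : Fin n → k),
      (∀ r, lam r ≠ 0) ∧ Rel c σ lam ∧ ∀ t, σ (x t) = y t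

lemma trans4 {c : Fin n → Fin n → k} (H : T4 c) {a b e d p q r s : Fin n}
    (hab : a ≠ b) (hae : a ≠ e) (had : a ≠ d) (hbe : b ≠ e) (hbd : b ≠ d) (hed : e ≠ d)
    (hpq : p ≠ q) (hpr : p ≠ r) (hps : p ≠ s) (hqr : q ≠ r) (hqs : q ≠ s) (hrs : r ≠ s) :
    ∃ (σ : Equiv.Perm (Fin n)) (lam : Fin n → k),
      (∀ t, lam t ≠ 0) ∧ Rel c σ lam ∧ σ a = p ∧ σ b = q ∧ σ e = r ∧ σ d = s := by
  obtain ⟨σ, lam, h0, h1, h2⟩ := H ![a, b, e, d] ![p, q, r, s]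
    (inj4' hab hae had hbe hbd hed) (inj4' hpq hpr hps hqr hqs hrs)
  refine ⟨σ, lam, h0, h1, ?_, ?_, ?_, ?_⟩
  · simpa using h2 0
  · simpa using h2 1
  · simpa using h2 2
  · simpa using h2 3

lemma fresh' {s : Finset (Fin n)} (h : s.card < n) : ∃ a, a ∉ s := by
  have h2 : 0 < sᶜ.card := by
    rw [Finset.card_compl]; simp only [Fintype.card_fin]; omega
  obtain ⟨a, ha⟩ := Finset.card_pos.mp h2
  exact ⟨a, Finset.mem_compl.mp ha⟩

lemma fresh4' (hn : 5 ≤ n) (a b c d : Fin n) : ∃ z, z ≠ a ∧ z ≠ b ∧ z ≠ c ∧ z ≠ d := by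
  have hcard : ({a, b, c, d} : Finset (Fin n)).card < n := by
    calc ({a, b, c, d} : Finset (Fin n)).card ≤ 3 + 1 := by
          apply le_trans (Finset.card_insert_le _ _)
          simp only [add_le_add_iff_right]
          apply le_trans (Finset.card_insert_le _ _)
          apply le_trans (Nat.add_le_add_right (Finset.card_insert_le _ _) 1)
          simp
      _ < n := by omega
  obtain ⟨z, hz⟩ := fresh' hcard
  simp only [Finset.mem_insert, Finset.mem_singleton, not_or] at hz
  exact ⟨z, hz.1, hz.2.1, hz.2.2.1, hz.2.2.2⟩

lemma trans2 {c : Fin n → Fin n → k} (hn : 5 ≤ n) (H : T4 c) {a b p q : Fin n}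
    (hab : a ≠ b) (hpq : p ≠ q) :
    ∃ (σ : Equiv.Perm (Fin n)) (lam : Fin n → k),
      (∀ t, lam t ≠ 0) ∧ Rel c σ lam ∧ σ a = p ∧ σ b = q := by
  obtain ⟨e, hea, heb, -, -⟩ := fresh4' hn a b b b
  obtain ⟨d, hda, hdb, hde, -⟩ := fresh4' hn a b e e
  obtain ⟨r, hrp, hrq, -, -⟩ := fresh4' hn p q q q
  obtain ⟨s, hsp, hsq, hsr, -⟩ := fresh4' hn p q r r
  obtain ⟨σ, lam, h0, h1, h2, h3, -, -⟩ :=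
    trans4 H hab hea.symm hda.symm heb.symm hdb.symm hde.symm
      hpq hrp.symm hsp.symm hrq.symm hsq.symm hsr.symm
  exact ⟨σ, lam, h0, h1, h2, h3⟩

lemma trans3 {c : Fin n → Fin n → k} (hn : 5 ≤ n) (H : T4 c) {a b e p q r : Fin n}
    (hab : a ≠ b) (hae : a ≠ e) (hbe : b ≠ e)
    (hpq : p ≠ q) (hpr : p ≠ r) (hqr : q ≠ r) :
    ∃ (σ : Equiv.Perm (Fin n)) (lam : Fin n → k),
      (∀ t, lam t ≠ 0) ∧ Rel c σ lam ∧ σ a = p ∧ σ b = q ∧ σ e = r := by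
  obtain ⟨d, hda, hdb, hde, -⟩ := fresh4' hn a b e e
  obtain ⟨s, hsp, hsq, hsr, -⟩ := fresh4' hn p q r r
  obtain ⟨σ, lam, h0, h1, h2, h3, h4, -⟩ :=
    trans4 H hab hae hda.symm hbe hdb.symm hde.symm
      hpq hpr hsp.symm hqr hsq.symm hsr.symm
  exact ⟨σ, lam, h0, h1, h2, h3, h4⟩

/-- nonzero transport along a realized permutation -/
lemma rel_ne_zero {c : Fin n → Fin n → k} {σ : Equiv.Perm (Fin n)} {lam : Fin n → k}
    (h0 : ∀ t, lam t ≠ 0) (h1 : Rel c σ lam) {i l : Fin n} (h : c i l ≠ 0) :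
    c (σ i) (σ l) ≠ 0 := by
  intro hz
  have := h1 i l
  rw [hz, mul_zero] at this
  exact (mul_ne_zero h (h0 l)) this

lemma off_nonzero {c : Fin n → Fin n → k} (hn : 5 ≤ n) (H : T4 c)
    {i j : Fin n} (hij : i ≠ j) (hc : c i j ≠ 0) :
    ∀ p q : Fin n, p ≠ q → c p q ≠ 0 := by
  intro p q hpq
  obtain ⟨σ, lam, h0, h1, h2, h3⟩ := trans2 hn H hij hpq
  have := rel_ne_zero h0 h1 hc
  rwa [h2, h3] at this

lemma rel_apply {c : Fin n → Fin n → k} {σ : Equiv.Perm (Fin n)} {lam : Fin n → k}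
    (h0 : ∀ t, lam t ≠ 0) (h1 : Rel c σ lam) (a b : Fin n) :
    c (σ a) (σ b) = c a b * lam b / lam a ^ 2 := by
  rw [eq_div_iff (pow_ne_zero 2 (h0 a))]
  linear_combination -(h1 a b)

lemma cross_inv {c : Fin n → Fin n → k} {σ : Equiv.Perm (Fin n)} {lam : Fin n → k}
    (h0 : ∀ t, lam t ≠ 0) (h1 : Rel c σ lam) (i x j y : Fin n) :
    c (σ i) (σ x) * c (σ j) (σ y) * (c i y * c j x)
      = c i x * c j y * (c (σ i) (σ y) * c (σ j) (σ x)) := by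
  rw [rel_apply h0 h1 i x, rel_apply h0 h1 j y, rel_apply h0 h1 i y, rel_apply h0 h1 j x]
  field_simp

/-- cross-ratio is one -/
lemma cross {c : Fin n → Fin n → k} (hn : 5 ≤ n) (H : T4 c)
    (hoff : ∀ p q : Fin n, p ≠ q → c p q ≠ 0) {i x j y : Fin n}
    (hix : i ≠ x) (hij : i ≠ j) (hiy : i ≠ y) (hxj : x ≠ j) (hxy : x ≠ y) (hjy : j ≠ y) :
    c i x * c j y = c i y * c j x := by
  obtain ⟨z, hzi, hzx, hzj, hzy⟩ := fresh4' hn i x j y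
  -- σ1 : (i,x,j,y) → (i,y,j,z)
  obtain ⟨σ1, lam1, g0, g1, e1, e2, e3, e4⟩ := trans4 H hix hij hiy hxj hxy hjy
    hiy hij hzi.symm hjy.symm hzy.symm hzj.symm
  -- σ2 : (i,x,j,y) → (i,x,j,z)
  obtain ⟨σ2, lam2, f0, f1, u1, u2, u3, u4⟩ := trans4 H hix hij hiy hxj hxy hjy
    hix hij hzi.symm hxj hzx.symm hzj.symm
  have I1 := cross_inv g0 g1 i x j y
  rw [e1, e2, e3, e4] at I1
  -- I1 : c i y * c j z * (c i y * c j x) = c i x * c j y * (c i z * c j y)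
  have I2 := cross_inv f0 f1 i x j y
  rw [u1, u2, u3, u4] at I2
  -- I2 : c i x * c j z * (c i y * c j x) = c i x * c j y * (c i z * c j x)
  -- now algebra
  have hA : c i x ≠ 0 := hoff _ _ hix
  have hB : c j y ≠ 0 := hoff _ _ hjy
  have hC : c i y ≠ 0 := hoff _ _ hiy
  have hD : c j x ≠ 0 := hoff _ _ (fun h => hxj h.symm)
  have hE : c i z ≠ 0 := hoff _ _ (fun h => hzi h.symm)
  have hF : c j z ≠ 0 := hoff _ _ (fun h => hzj h.symm)
  -- from I2 (cancel c i x * c j x): c j z * c i y = c j y * c i z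
  have hstar : c j z * c i y = c j y * c i z := by
    have h2 : (c j z * c i y) * (c i x * c j x) = (c j y * c i z) * (c i x * c j x) := by
      linear_combination I2
    exact mul_right_cancel₀ (mul_ne_zero hA hD) h2
  -- substitute into I1 and cancel
  have h3 : (c i y * c j x) * (c i z * c j y) = (c i x * c j y) * (c i z * c j y) := by
    calc (c i y * c j x) * (c i z * c j y) = (c j y * c i z) * (c i y * c j x) := by ring
      _ = (c j z * c i y) * (c i y * c j x) := by rw [hstar]
      _ = c i y * c j z * (c i y * c j x) := by ring
      _ = c i x * c j y * (c i z * c j y) := I1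
      _ = (c i x * c j y) * (c i z * c j y) := by ring
  exact (mul_right_cancel₀ (mul_ne_zero hE hB) h3).symm

lemma vinv {c : Fin n → Fin n → k} {σ : Equiv.Perm (Fin n)} {lam : Fin n → k}
    (h0 : ∀ t, lam t ≠ 0) (h1 : Rel c σ lam) (i x : Fin n) :
    c (σ i) (σ x) ^ 2 * c (σ x) (σ i) * lam i ^ 3 = c i x ^ 2 * c x i := by
  have hx := h0 x
  have hi := h0 i
  rw [rel_apply h0 h1 i x, rel_apply h0 h1 x i]
  field_simp

lemma vconst {c : Fin n → Fin n → k} (hn : 5 ≤ n) (H : T4 c)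
    (hoff : ∀ p q : Fin n, p ≠ q → c p q ≠ 0) {i x y : Fin n}
    (hxi : x ≠ i) (hyi : y ≠ i) (hxy : x ≠ y) :
    c i x ^ 2 * c x i = c i y ^ 2 * c y i := by
  obtain ⟨z, hzi, hzx, hzy, -⟩ := fresh4' hn i x y y
  -- σ1 : (i,x,y) → (i,y,z)
  obtain ⟨σ1, lam1, g0, g1, e1, e2, e3⟩ := trans3 hn H (fun h => hxi h.symm) (fun h => hyi h.symm) hxy
    (fun h => hyi h.symm) (fun h => hzi h.symm) (fun h => hzy h.symm)
  -- σ2 : (i,x,y) → (i,x,z)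
  obtain ⟨σ2, lam2, f0, f1, u1, u2, u3⟩ := trans3 hn H (fun h => hxi h.symm) (fun h => hyi h.symm) hxy
    (fun h => hxi h.symm) (fun h => hzi h.symm) (fun h => hzx h.symm)
  have Vx : c i x ^ 2 * c x i ≠ 0 :=
    mul_ne_zero (pow_ne_zero 2 (hoff _ _ (fun h => hxi h.symm))) (hoff _ _ hxi)
  have Vy : c i y ^ 2 * c y i ≠ 0 :=
    mul_ne_zero (pow_ne_zero 2 (hoff _ _ (fun h => hyi h.symm))) (hoff _ _ hyi)
  have A1 := vinv g0 g1 i x; rw [e1, e2] at A1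
  -- A1 : c i y ^2 * c y i * lam1 i ^3 = c i x^2 * c x i
  have A2 := vinv g0 g1 i y; rw [e1, e3] at A2
  -- A2 : c i z ^2 * c z i * lam1 i ^3 = c i y^2 * c y i
  have B1 := vinv f0 f1 i x; rw [u1, u2] at B1
  -- B1 : c i x^2 * c x i * lam2 i ^3 = c i x^2 * c x i
  have B2 := vinv f0 f1 i y; rw [u1, u3] at B2
  -- B2 : c i z^2 * c z i * lam2 i ^3 = c i y^2 * c y i
  have hL2 : lam2 i ^ 3 = 1 := by
    have : c i x ^ 2 * c x i * lam2 i ^ 3 = c i x ^ 2 * c x i * 1 := by rw [mul_one]; exact B1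
    exact mul_left_cancel₀ Vx this
  rw [hL2, mul_one] at B2
  -- B2 : c i z ^2 * c z i = c i y ^2 * c y i
  rw [B2] at A2
  -- A2 : c i y^2 * c y i * lam1 i ^3 = c i y^2 * c y i
  have hL1 : lam1 i ^ 3 = 1 := by
    have : c i y ^ 2 * c y i * lam1 i ^ 3 = c i y ^ 2 * c y i * 1 := by rw [mul_one]; exact A2
    exact mul_left_cancel₀ Vy this
  rw [hL1, mul_one] at A1
  exact A1.symm


lemma factB {c : Fin n → Fin n → k} (hn : 5 ≤ n) (H : T4 c)
    (hoff : ∀ p q : Fin n, p ≠ q → c p q ≠ 0) :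
    ∃ (s r : Fin n → k), (∀ j, s j ≠ 0) ∧ (∀ i, r i ≠ 0) ∧
      (∀ i j, i ≠ j → c i j = r i * s j) := by
  set P0 : Fin n := ⟨0, by omega⟩ with hP0
  set P1 : Fin n := ⟨1, by omega⟩ with hP1
  set P2 : Fin n := ⟨2, by omega⟩ with hP2
  set P3 : Fin n := ⟨3, by omega⟩ with hP3
  have h01 : P0 ≠ P1 := Fin.ne_of_val_ne (by norm_num)
  have h02 : P0 ≠ P2 := Fin.ne_of_val_ne (by norm_num)
  have h03 : P0 ≠ P3 := Fin.ne_of_val_ne (by norm_num)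
  have h12 : P1 ≠ P2 := Fin.ne_of_val_ne (by norm_num)
  have h13 : P1 ≠ P3 := Fin.ne_of_val_ne (by norm_num)
  have h23 : P2 ≠ P3 := Fin.ne_of_val_ne (by norm_num)
  have n20 : c P2 P0 ≠ 0 := hoff _ _ h02.symm
  have n21 : c P2 P1 ≠ 0 := hoff _ _ h12.symm
  have n30 : c P3 P0 ≠ 0 := hoff _ _ h03.symm
  have n01 : c P0 P1 ≠ 0 := hoff _ _ h01
  have n32 : c P3 P2 ≠ 0 := hoff _ _ h23.symm
  set s : Fin n → k := fun j => if j = P2 then c P3 P2 / c P3 P0 else c P2 j / c P2 P0 with hs_def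
  set r : Fin n → k := fun i => if i = P0 then c P0 P1 * c P2 P0 / c P2 P1 else c i P0 with hr_def
  have sP2 : s P2 = c P3 P2 / c P3 P0 := by simp [hs_def]
  have sne : ∀ j, j ≠ P2 → s j = c P2 j / c P2 P0 := by intro j h; simp [hs_def, h]
  have rP0 : r P0 = c P0 P1 * c P2 P0 / c P2 P1 := by simp [hr_def]
  have rne : ∀ i, i ≠ P0 → r i = c i P0 := by intro i h; simp [hr_def, h]
  have hs : ∀ j, s j ≠ 0 := by
    intro j
    by_cases hj : j = P2
    · rw [hj, sP2]; exact div_ne_zero n32 n30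
    · rw [sne j hj]; exact div_ne_zero (hoff _ _ (fun h => hj h.symm)) n20
  have hr : ∀ i, r i ≠ 0 := by
    intro i
    by_cases hi : i = P0
    · rw [hi, rP0]; exact div_ne_zero (mul_ne_zero n01 n20) n21
    · rw [rne i hi]; exact hoff _ _ hi
  refine ⟨s, r, hs, hr, ?_⟩
  intro i j hij
  by_cases hj0 : j = P0
  · subst hj0
    rw [sne P0 h02, rne i hij, div_self n20, mul_one]
  by_cases hj2 : j = P2
  · subst hj2
    rw [sP2]
    by_cases hi3 : i = P3
    · subst hi3
      rw [rne P3 h03.symm]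
      field_simp
    by_cases hi0 : i = P0
    · subst hi0
      rw [rP0]
      have cr1 : c P0 P2 * c P3 P1 = c P0 P1 * c P3 P2 :=
        cross hn H hoff h02 h03 h01 h23 h12.symm h13.symm
      have cr2 : c P2 P0 * c P3 P1 = c P2 P1 * c P3 P0 :=
        cross hn H hoff h02.symm h23 h12.symm h03 h01 h13.symm
      have key : c P0 P2 * (c P2 P1 * c P3 P0) = c P0 P1 * c P2 P0 * c P3 P2 := by
        apply mul_right_cancel₀ (hoff P3 P1 h13.symm)
        linear_combination (c P2 P1 * c P3 P0) * cr1 - c P0 P1 * c P3 P2 * cr2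
      field_simp
      linear_combination key
    · rw [rne i hi0]
      have cr : c i P2 * c P3 P0 = c i P0 * c P3 P2 :=
        cross hn H hoff hij hi3 hi0 h23 h02.symm h03.symm
      field_simp
      linear_combination cr
  · rw [sne j hj2]
    by_cases hi2 : i = P2
    · subst hi2
      rw [rne P2 h02.symm]
      field_simp
    by_cases hi0 : i = P0
    · subst hi0
      rw [rP0]
      by_cases hj1 : j = P1
      · subst hj1
        field_simp
      · have cr : c P0 j * c P2 P1 = c P0 P1 * c P2 j :=
          cross hn H hoff (fun h => hj0 h.symm) h02 h01 hj2 hj1 h12.symm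
        field_simp
        linear_combination cr
    · rw [rne i hi0]
      have cr : c i j * c P2 P0 = c i P0 * c P2 j :=
        cross hn H hoff hij hi2 hi0 hj2 hj0 h02.symm
      field_simp
      linear_combination cr

lemma three_point (hn : 3 ≤ n) {t u : Fin n → k} (ht : ∀ a, t a ≠ 0) (hu : ∀ a, u a ≠ 0)
    (hrel : ∀ a b : Fin n, a ≠ b → t b * u a ^ 2 = u b * t a ^ 2) : ∀ x, t x = u x := by
  intro x
  have hc1 : ({x} : Finset (Fin n)).card < n := by simp; omega
  obtain ⟨i, hi⟩ := fresh' hc1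
  simp only [Finset.mem_singleton] at hi
  have hc2 : ({x, i} : Finset (Fin n)).card < n := by
    calc ({x, i} : Finset (Fin n)).card ≤ 1 + 1 := by
          apply le_trans (Finset.card_insert_le _ _); simp
      _ < n := by omega
  obtain ⟨y, hy⟩ := fresh' hc2
  simp only [Finset.mem_insert, Finset.mem_singleton, not_or] at hy
  obtain ⟨hyx, hyi⟩ := hy
  have hix : i ≠ x := hi
  have h1 := hrel i x hix
  have h2 := hrel i y (Ne.symm hyi)
  have h3 := hrel y x hyx
  have hA : t x * u y = u x * t y := by
    have hcan : (t x * u y) * (u i ^ 2 * t i ^ 2) = (u x * t y) * (u i ^ 2 * t i ^ 2) := by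
      calc (t x * u y) * (u i ^ 2 * t i ^ 2) = (t x * u i ^ 2) * (u y * t i ^ 2) := by ring
        _ = (u x * t i ^ 2) * (t y * u i ^ 2) := by rw [h1, ← h2]
        _ = (u x * t y) * (u i ^ 2 * t i ^ 2) := by ring
    exact mul_right_cancel₀ (mul_ne_zero (pow_ne_zero 2 (hu i)) (pow_ne_zero 2 (ht i))) hcan
  have hB : u y = t y := by
    have hcan : u y * (t x * u y) = t y * (t x * u y) := by
      calc u y * (t x * u y) = t x * u y ^ 2 := by ring
        _ = u x * t y ^ 2 := h3
        _ = t y * (u x * t y) := by ring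
        _ = t y * (t x * u y) := by rw [← hA]
    exact mul_right_cancel₀ (mul_ne_zero (ht x) (hu y)) hcan
  have := hA
  rw [← hB] at this
  exact mul_right_cancel₀ (hu y) this

lemma structB {c : Fin n → Fin n → k} (hn : 5 ≤ n) (H : T4 c)
    (hoff : ∀ p q : Fin n, p ≠ q → c p q ≠ 0) :
    ∃ (s : Fin n → k) (κ : k), (∀ j, s j ≠ 0) ∧ κ ≠ 0 ∧
      (∀ i j, i ≠ j → c i j * s i ^ 2 = κ * s j) := by
  obtain ⟨s, r, hs, hr, hfact⟩ := factB hn H hoff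
  have hκ : ∀ x y : Fin n, x ≠ y → r x * s x ^ 2 = r y * s y ^ 2 := by
    intro x y hxy
    obtain ⟨i, hix, hiy, -, -⟩ := fresh4' hn x y y y
    have hv := vconst hn H hoff hix.symm hiy.symm hxy
    rw [hfact i x hix, hfact x i hix.symm,
        hfact i y hiy, hfact y i hiy.symm] at hv
    have hcan : (r x * s x ^ 2) * (r i ^ 2 * s i) = (r y * s y ^ 2) * (r i ^ 2 * s i) := by
      linear_combination hv
    exact mul_right_cancel₀ (mul_ne_zero (pow_ne_zero 2 (hr i)) (hs i)) hcan
  set x0 : Fin n := ⟨0, by omega⟩ with hx0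
  refine ⟨s, r x0 * s x0 ^ 2, hs, mul_ne_zero (hr x0) (pow_ne_zero 2 (hs x0)), ?_⟩
  intro i j hij
  rw [hfact i j hij]
  by_cases hi : i = x0
  · subst hi; ring
  · linear_combination s j * hκ i x0 hi

lemma lam_s {c : Fin n → Fin n → k} (hn : 5 ≤ n) {s : Fin n → k} {κ : k}
    (hs : ∀ j, s j ≠ 0) (hκ : κ ≠ 0)
    (hmul : ∀ i j, i ≠ j → c i j * s i ^ 2 = κ * s j)
    {σ : Equiv.Perm (Fin n)} {lam : Fin n → k}
    (h0 : ∀ t, lam t ≠ 0) (h1 : Rel c σ lam) :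
    ∀ x, lam x * s x = s (σ x) := by
  have := three_point (t := fun a => lam a * s a) (u := fun a => s (σ a)) (by omega : 3 ≤ n)
    (fun a => mul_ne_zero (h0 a) (hs a)) (fun a => hs (σ a)) ?_
  · exact this
  intro a b hab
  have e1 := hmul a b hab
  have e2 := hmul (σ a) (σ b) (fun h => hab (σ.injective h))
  have hrel := h1 a b
  apply mul_left_cancel₀ hκ
  linear_combination -(lam b * s (σ a) ^ 2) * e1 + (lam a ^ 2 * s a ^ 2) * e2
    + (s a ^ 2 * s (σ a) ^ 2) * hrel

lemma diagB {c : Fin n → Fin n → k} (hn : 5 ≤ n) (H : T4 c) {s : Fin n → k} {κ : k}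
    (hs : ∀ j, s j ≠ 0) (hκ : κ ≠ 0)
    (hmul : ∀ i j, i ≠ j → c i j * s i ^ 2 = κ * s j) :
    ∀ i j : Fin n, c i i * s i = c j j * s j := by
  intro i j
  by_cases hij : i = j
  · rw [hij]
  obtain ⟨u, hui, huj, -, -⟩ := fresh4' hn i j j j
  obtain ⟨σ, lam, h0, h1, hσi, hσu⟩ := trans2 hn H (fun h => hui h.symm) (fun h => huj h.symm)
  have hls := lam_s hn hs hκ hmul h0 h1 i
  rw [hσi] at hls
  have hd := h1 i i
  rw [hσi] at hd
  have e : c i i = lam i * c j j := by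
    apply mul_left_cancel₀ (h0 i)
    linear_combination hd
  rw [e]
  linear_combination c j j * hls

lemma surj_core {c : Fin n → Fin n → k} (hn : 5 ≤ n) (H : T4 c)
    (hcol : ∀ j, ∃ i, c i j ≠ 0) (τ : Equiv.Perm (Fin n)) :
    ∃ lam : Fin n → k, (∀ t, lam t ≠ 0) ∧ Rel c τ lam := by
  by_cases hD : ∀ p q : Fin n, p ≠ q → c p q = 0
  · have hdg : ∀ i, c i i ≠ 0 := by
      intro i
      obtain ⟨j, hj⟩ := hcol i
      by_cases h : j = i
      · rwa [h] at hj
      · exact absurd (hD j i h) hj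
    refine ⟨fun i => c i i / c (τ i) (τ i), fun i => div_ne_zero (hdg i) (hdg _), ?_⟩
    intro i l
    by_cases hil : i = l
    · subst hil
      have h2 := hdg (τ i)
      field_simp
    · rw [hD i l hil, hD (τ i) (τ l) (fun h => hil (τ.injective h))]
      ring
  · push_neg at hD
    obtain ⟨p, q, hpq, hc⟩ := hD
    have hoff := off_nonzero hn H hpq hc
    obtain ⟨s, κ, hs, hκ, hmul⟩ := structB hn H hoff
    have hdiag := diagB hn H hs hκ hmul
    refine ⟨fun x => s (τ x) / s x, fun x => div_ne_zero (hs _) (hs _), ?_⟩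
    intro i l
    by_cases hil : i = l
    · subst hil
      have hd := hdiag i (τ i)
      have h1 := hs i
      have h2 := hs (τ i)
      have key : c i i * s (τ i) * s i = s (τ i) ^ 2 * c (τ i) (τ i) := by
        linear_combination s (τ i) * hd
      field_simp
      linear_combination hd
    · have e1 := hmul i l hil
      have e2 := hmul (τ i) (τ l) (fun h => hil (τ.injective h))
      have h1 := hs l
      have h2 := hs (τ l)
      have h3 := hs i
      have h4 := hs (τ i)
      have key : c i l * s (τ l) * s i ^ 2 = s (τ i) ^ 2 * c (τ i) (τ l) * s l := by
        linear_combination s (τ l) * e1 - s l * e2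
      field_simp
      linear_combination key

lemma inj_core {c : Fin n → Fin n → k} (hn : 5 ≤ n) (H : T4 c)
    (hcol : ∀ j, ∃ i, c i j ≠ 0) {σ : Equiv.Perm (Fin n)} {lam lam' : Fin n → k}
    (h0 : ∀ t, lam t ≠ 0) (h1 : Rel c σ lam)
    (h0' : ∀ t, lam' t ≠ 0) (h1' : Rel c σ lam') : lam = lam' := by
  by_cases hD : ∀ p q : Fin n, p ≠ q → c p q = 0
  · funext j
    obtain ⟨i, hi⟩ := hcol j
    have hij : i = j := by
      by_contra h
      exact hi (hD i j h)
    subst hij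
    have hdg : c i i ≠ 0 := hi
    have hd := h1 i i
    have hd' := h1' i i
    have hC : c (σ i) (σ i) ≠ 0 := rel_ne_zero h0 h1 hdg
    have e : c i i = lam i * c (σ i) (σ i) := by
      apply mul_left_cancel₀ (h0 i); linear_combination hd
    have e' : c i i = lam' i * c (σ i) (σ i) := by
      apply mul_left_cancel₀ (h0' i); linear_combination hd'
    apply mul_right_cancel₀ hC
    rw [← e, ← e']
  · push_neg at hD
    obtain ⟨p, q, hpq, hc⟩ := hD
    have hoff := off_nonzero hn H hpq hc
    funext x
    refine three_point (by omega : 3 ≤ n) h0 h0' ?_ x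
    intro a b hab
    have D0 : c (σ a) (σ b) ≠ 0 := rel_ne_zero h0 h1 (hoff a b hab)
    have ha := h1 a b
    have hb := h1' a b
    have hcan : (lam b * lam' a ^ 2) * (c a b * c (σ a) (σ b))
        = (lam' b * lam a ^ 2) * (c a b * c (σ a) (σ b)) := by
      linear_combination (lam' a ^ 2 * c (σ a) (σ b)) * ha - (lam a ^ 2 * c (σ a) (σ b)) * hb
    exact mul_right_cancel₀ (mul_ne_zero (hoff a b hab) D0) hcan


end Stmt10Aux

namespace Stmt10Bridge

variable {k X : Type*} [Field k] [NonUnitalNonAssocCommRing X]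
    [Module k X] [SMulCommClass k X X] [IsScalarTower k X X]
    {n : ℕ} (b : Module.Basis (Fin n) k X)

lemma prod_expand (hnat : ∀ i j : Fin n, i ≠ j → b i * b j = 0) (f g : Fin n → k) :
    (∑ i, f i • b i) * (∑ j, g j • b j) = ∑ i, (f i * g i) • (b i * b i) := by
  rw [Finset.sum_mul_sum]
  refine Finset.sum_congr rfl fun i _ => ?_
  rw [Finset.sum_eq_single i]
  · rw [smul_mul_smul_comm]
  · intro j _ hji
    rw [smul_mul_smul_comm, hnat i j (fun h => hji h.symm), smul_zero]
  · intro h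
    exact absurd (Finset.mem_univ i) h

lemma mul_repr (hnat : ∀ i j : Fin n, i ≠ j → b i * b j = 0) (u v : X) :
    u * v = ∑ i, (b.repr u i * b.repr v i) • (b i * b i) := by
  conv_lhs => rw [← b.sum_repr u, ← b.sum_repr v]
  exact prod_expand b hnat _ _

lemma col_ne (hnat : ∀ i j : Fin n, i ≠ j → b i * b j = 0)
    (hidem : Submodule.span k {z : X | ∃ x y : X, z = x * y} = ⊤) :
    ∀ j, ∃ i, b.repr (b i * b i) j ≠ 0 := by
  intro j
  by_contra h
  push_neg at h
  have hspan : Submodule.span k {z : X | ∃ x y : X, z = x * y} ≤ LinearMap.ker (b.coord j) := by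
    rw [Submodule.span_le]
    rintro z ⟨x, y, rfl⟩
    rw [SetLike.mem_coe, LinearMap.mem_ker, Module.Basis.coord_apply, mul_repr b hnat x y, map_sum]
    rw [Finsupp.finset_sum_apply]
    refine Finset.sum_eq_zero fun i _ => ?_
    rw [map_smul, Finsupp.smul_apply, h i, smul_zero]
  rw [hidem, top_le_iff] at hspan
  have h1 : b.coord j (b j) = 0 := by
    have : b j ∈ LinearMap.ker (b.coord j) := hspan ▸ Submodule.mem_top
    exact LinearMap.mem_ker.mp this
  rw [Module.Basis.coord_apply, b.repr_self, Finsupp.single_eq_same] at h1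
  exact one_ne_zero h1

lemma rel_of_aut (hnat : ∀ i j : Fin n, i ≠ j → b i * b j = 0) (φ : X ≃ₗ[k] X)
    (hm : ∀ u v : X, φ (u * v) = φ u * φ v) (lam : Fin n → k) (σ : Equiv.Perm (Fin n))
    (hφ : ∀ r, φ (b r) = lam r • b (σ r)) :
    ∀ i l, b.repr (b i * b i) l * lam l = lam i ^ 2 * b.repr (b (σ i) * b (σ i)) (σ l) := by
  intro i l
  have expand : φ (b i * b i) = ∑ l', (b.repr (b i * b i) l' * lam l') • b (σ l') := by
    conv_lhs => rw [← b.sum_repr (b i * b i)]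
    rw [map_sum]
    refine Finset.sum_congr rfl fun l' _ => ?_
    rw [map_smul, hφ l', smul_smul]
  have h2 : b.repr (φ (b i * b i)) (σ l) = b.repr (b i * b i) l * lam l := by
    rw [expand, map_sum, Finsupp.finset_sum_apply]
    rw [Finset.sum_eq_single l]
    · rw [map_smul, Finsupp.smul_apply, b.repr_self, Finsupp.single_eq_same, smul_eq_mul,
        mul_one]
    · intro l' _ hl'
      rw [map_smul, Finsupp.smul_apply, b.repr_self,
        Finsupp.single_eq_of_ne (σ.injective.ne hl').symm, smul_zero]
    · intro h
      exact absurd (Finset.mem_univ l) h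
  have h3 : b.repr (φ (b i) * φ (b i)) (σ l)
      = lam i ^ 2 * b.repr (b (σ i) * b (σ i)) (σ l) := by
    rw [hφ i, smul_mul_smul_comm, map_smul, Finsupp.smul_apply, smul_eq_mul, pow_two]
  rw [← h2, ← h3, hm]

lemma build (hnat : ∀ i j : Fin n, i ≠ j → b i * b j = 0) (τ : Equiv.Perm (Fin n))
    (lam : Fin n → k) (hl : ∀ r, lam r ≠ 0)
    (hrel : ∀ i l, b.repr (b i * b i) l * lam l
      = lam i ^ 2 * b.repr (b (τ i) * b (τ i)) (τ l)) :
    ∃ φ : X ≃ₗ[k] X, (∀ u v : X, φ (u * v) = φ u * φ v) ∧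
      ∀ r, φ (b r) = lam r • b (τ r) := by
  set f : X →ₗ[k] X := b.constr k (fun i => lam i • b (τ i)) with hf
  set g : X →ₗ[k] X := b.constr k (fun i => (lam (τ.symm i))⁻¹ • b (τ.symm i)) with hg
  have hfb : ∀ i, f (b i) = lam i • b (τ i) := fun i => b.constr_basis k _ i
  have hgb : ∀ i, g (b i) = (lam (τ.symm i))⁻¹ • b (τ.symm i) := fun i => b.constr_basis k _ i
  have hgf : g.comp f = LinearMap.id := by
    refine b.ext fun i => ?_
    rw [LinearMap.comp_apply, hfb, map_smul, hgb, LinearMap.id_apply,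
      Equiv.symm_apply_apply, smul_smul, mul_inv_cancel₀ (hl i), one_smul]
  have hfg : f.comp g = LinearMap.id := by
    refine b.ext fun i => ?_
    rw [LinearMap.comp_apply, hgb, map_smul, hfb, LinearMap.id_apply,
      Equiv.apply_symm_apply, smul_smul, inv_mul_cancel₀ (hl (τ.symm i)), one_smul]
  refine ⟨LinearEquiv.ofLinear f g hfg hgf, ?_, fun r => hfb r⟩
  intro u v
  show f (u * v) = f u * f v
  have hfu : ∀ w : X, f w = ∑ j, (b.repr w (τ.symm j) * lam (τ.symm j)) • b j := by
    intro w
    conv_lhs => rw [← b.sum_repr w]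
    rw [map_sum, ← Equiv.sum_comp τ (fun j => (b.repr w (τ.symm j) * lam (τ.symm j)) • b j)]
    refine Finset.sum_congr rfl fun i _ => ?_
    rw [map_smul, hfb, Equiv.symm_apply_apply, smul_smul]
  have hsq : ∀ i, f (b i * b i) = ∑ l, (b.repr (b i * b i) l * lam l) • b (τ l) := by
    intro i
    conv_lhs => rw [← b.sum_repr (b i * b i)]
    rw [map_sum]
    refine Finset.sum_congr rfl fun l _ => ?_
    rw [map_smul, hfb, smul_smul]
  -- left side
  have lhs_eq : f (u * v) = ∑ i, ∑ l,
      ((b.repr u i * b.repr v i) * (b.repr (b i * b i) l * lam l)) • b (τ l) := by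
    rw [mul_repr b hnat u v, map_sum]
    refine Finset.sum_congr rfl fun i _ => ?_
    rw [map_smul, hsq, Finset.smul_sum]
    refine Finset.sum_congr rfl fun l _ => ?_
    rw [smul_smul]
  -- right side
  have rhs_eq : f u * f v = ∑ i, ∑ l,
      ((b.repr u i * b.repr v i) * (lam i ^ 2 * b.repr (b (τ i) * b (τ i)) (τ l))) • b (τ l) := by
    rw [hfu u, hfu v, prod_expand b hnat]
    rw [← Equiv.sum_comp τ (fun j => ((b.repr u (τ.symm j) * lam (τ.symm j)) *
      (b.repr v (τ.symm j) * lam (τ.symm j))) • (b j * b j))]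
    refine Finset.sum_congr rfl fun i _ => ?_
    simp only [Equiv.symm_apply_apply]
    have hbt : b (τ i) * b (τ i) = ∑ l, b.repr (b (τ i) * b (τ i)) (τ l) • b (τ l) := by
      conv_lhs => rw [← b.sum_repr (b (τ i) * b (τ i))]
      rw [← Equiv.sum_comp τ (fun l => b.repr (b (τ i) * b (τ i)) l • b l)]
    conv_lhs => rw [hbt]
    rw [Finset.smul_sum]
    refine Finset.sum_congr rfl fun l _ => ?_
    rw [smul_smul]
    ring_nf
  rw [lhs_eq, rhs_eq]
  refine Finset.sum_congr rfl fun i _ => Finset.sum_congr rfl fun l _ => ?_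
  rw [hrel i l]

end Stmt10Bridge


/-- Theorem A(ii): for `n ≥ 5`, if `ρ_X(Aut(X)) ≤ Sₙ` is 4-transitive then `ρ_X` is
faithful and full: every permutation of `Sₙ` is induced by a unique automorphism, so
`ρ_X` induces an isomorphism `Aut(X) ≅ Sₙ`. -/
theorem stmt10 {k X : Type*} [Field k] [NonUnitalNonAssocCommRing X]
    [Module k X] [SMulCommClass k X X] [IsScalarTower k X X]
    {n : ℕ} (hn : 5 ≤ n) (b : Module.Basis (Fin n) k X)
    (hnat : ∀ i j : Fin n, i ≠ j → b i * b j = 0)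
    (hidem : Submodule.span k {z : X | ∃ x y : X, z = x * y} = ⊤)
    (htrans : ∀ x y : Fin 4 → Fin n, Function.Injective x → Function.Injective y →
      ∃ (φ : X ≃ₗ[k] X) (lam : Fin n → k) (σ : Equiv.Perm (Fin n)),
        (∀ u v : X, φ (u * v) = φ u * φ v) ∧ (∀ r, lam r ≠ 0) ∧
        (∀ r, φ (b r) = lam r • b (σ r)) ∧ ∀ t, σ (x t) = y t) :
    (∀ (φ φ' : X ≃ₗ[k] X), (∀ u v : X, φ (u * v) = φ u * φ v) →
      (∀ u v : X, φ' (u * v) = φ' u * φ' v) →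
      ∀ (lam lam' : Fin n → k) (σ : Equiv.Perm (Fin n)),
        (∀ r, lam r ≠ 0) → (∀ r, φ (b r) = lam r • b (σ r)) →
        (∀ r, lam' r ≠ 0) → (∀ r, φ' (b r) = lam' r • b (σ r)) → φ = φ') ∧
    (∀ τ : Equiv.Perm (Fin n),
      ∃ (φ : X ≃ₗ[k] X) (lam : Fin n → k),
        (∀ u v : X, φ (u * v) = φ u * φ v) ∧ (∀ r, lam r ≠ 0) ∧
        (∀ r, φ (b r) = lam r • b (τ r))) := by
  classical
  have H : Stmt10Aux.T4 (fun i l => b.repr (b i * b i) l) := by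
    intro x y hx hy
    obtain ⟨φ, lam, σ, hm, hl, hφ, hmatch⟩ := htrans x y hx hy
    exact ⟨σ, lam, hl, Stmt10Bridge.rel_of_aut b hnat φ hm lam σ hφ, hmatch⟩
  have hcol : ∀ j, ∃ i, b.repr (b i * b i) j ≠ 0 := Stmt10Bridge.col_ne b hnat hidem
  constructor
  · intro φ φ' hm hm' lam lam' σ hl hφ hl' hφ'
    have r1 : Stmt10Aux.Rel (fun i l => b.repr (b i * b i) l) σ lam :=
      Stmt10Bridge.rel_of_aut b hnat φ hm lam σ hφ
    have r2 : Stmt10Aux.Rel (fun i l => b.repr (b i * b i) l) σ lam' :=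
      Stmt10Bridge.rel_of_aut b hnat φ' hm' lam' σ hφ'
    have hll : lam = lam' := Stmt10Aux.inj_core hn H hcol hl r1 hl' r2
    apply LinearEquiv.toLinearMap_injective
    refine b.ext fun i => ?_
    show φ (b i) = φ' (b i)
    rw [hφ i, hφ' i, hll]
  · intro τ
    obtain ⟨lam, hl, hrel⟩ := Stmt10Aux.surj_core hn H hcol τ
    obtain ⟨φ, hm, hφ⟩ := Stmt10Bridge.build b hnat τ lam hl hrel
    exact ⟨φ, lam, hm, hl, hφ⟩
end

section
/- For n ≥ 6, there is no n-dimensional idempotent evolution algebra X over any field with Aut(X) isomorphic to the alternating group A_n. -/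
open Equiv Equiv.Perm Finset

section GroupAux

variable {n : ℕ}

lemma pick_avoid5 (hn : 6 ≤ n) (a b c d e : Fin n) :
    ∃ z : Fin n, z ≠ a ∧ z ≠ b ∧ z ≠ c ∧ z ≠ d ∧ z ≠ e := by
  by_contra h
  push_neg at h
  have hsub : (Finset.univ : Finset (Fin n)) ⊆ {a, b, c, d, e} := by
    intro z _
    by_cases h1 : z = a; · simp [h1]
    by_cases h2 : z = b; · simp [h2]
    by_cases h3 : z = c; · simp [h3]
    by_cases h4 : z = d; · simp [h4]
    simp [h z h1 h2 h3 h4]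
  have h1 := Finset.card_le_card hsub
  have h2 : ({a, b, c, d, e} : Finset (Fin n)).card ≤ 5 := by
    have := Finset.card_insert_le a ({b, c, d, e} : Finset (Fin n))
    have := Finset.card_insert_le b ({c, d, e} : Finset (Fin n))
    have := Finset.card_insert_le c ({d, e} : Finset (Fin n))
    have := Finset.card_insert_le d ({e} : Finset (Fin n))
    simp_all
    omega
  rw [Finset.card_univ, Fintype.card_fin] at h1
  omega

/-- an even permutation sending two prescribed points to two prescribed points -/
lemma even_two_trans (hn : 6 ≤ n) (p q i j : Fin n) (hpq : p ≠ q) (hij : i ≠ j) :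
    ∃ σ : Perm (Fin n), Perm.sign σ = 1 ∧ σ p = i ∧ σ q = j := by
  set j'' := Equiv.swap p i q with hj''
  have hj''i : j'' ≠ i := by
    rw [hj'']
    rcases eq_or_ne q p with h | h
    · exact absurd h hpq.symm
    · rcases eq_or_ne q i with h2 | h2
      · rw [h2, Equiv.swap_apply_right]
        exact fun hpi => hpq (hpi.trans h2.symm)
      · rw [Equiv.swap_apply_of_ne_of_ne h h2]; exact h2
  set σ₁ := Equiv.swap j'' j * Equiv.swap p i with hσ₁
  have h1 : σ₁ p = i := by
    rw [hσ₁]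
    simp only [Perm.mul_apply, Equiv.swap_apply_left]
    exact Equiv.swap_apply_of_ne_of_ne (Ne.symm hj''i) hij
  have h2 : σ₁ q = j := by
    rw [hσ₁]
    simp only [Perm.mul_apply, ← hj'']
    exact Equiv.swap_apply_left _ _
  rcases eq_or_ne (Perm.sign σ₁) 1 with hs | hs
  · exact ⟨σ₁, hs, h1, h2⟩
  · obtain ⟨u, hui, huj, -, -, -⟩ := pick_avoid5 hn i j i j i
    obtain ⟨v, hvi, hvj, hvu, -, -⟩ := pick_avoid5 hn i j u u u
    refine ⟨Equiv.swap u v * σ₁, ?_, ?_, ?_⟩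
    · rw [Perm.sign_mul, Perm.sign_swap (Ne.symm hvu)]
      rcases Int.units_eq_one_or (Perm.sign σ₁) with h | h
      · exact absurd h hs
      · rw [h]; decide
    · rw [Perm.mul_apply, h1, Equiv.swap_apply_of_ne_of_ne (Ne.symm hui) (Ne.symm hvi)]
    · rw [Perm.mul_apply, h2, Equiv.swap_apply_of_ne_of_ne (Ne.symm huj) (Ne.symm hvj)]

/-- any homomorphism from the alternating group to `ℤˣ` is trivial -/
lemma hom_to_units_trivial (χ : alternatingGroup (Fin n) →* ℤˣ) (g : alternatingGroup (Fin n)) :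
    χ g = 1 := by
  have key : ∀ σ : Perm (Fin n), σ.IsThreeCycle →
      ∀ hσ : σ ∈ alternatingGroup (Fin n), χ ⟨σ, hσ⟩ = 1 := by
    intro σ h3 hσ
    have hσ3 : σ ^ 3 = 1 := h3.orderOf ▸ pow_orderOf_eq_one σ
    have ho : (⟨σ, hσ⟩ : alternatingGroup (Fin n)) ^ 3 = 1 := by
      apply Subtype.ext; simp [hσ3]
    have h4 : (⟨σ, hσ⟩ : alternatingGroup (Fin n)) ^ 4 = ⟨σ, hσ⟩ := by
      rw [pow_succ, ho, one_mul]
    calc χ ⟨σ, hσ⟩ = χ (⟨σ, hσ⟩ ^ 4) := by rw [h4]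
    _ = (χ ⟨σ, hσ⟩ ^ 2) ^ 2 := by rw [map_pow, ← pow_mul]
    _ = 1 := by rw [Int.units_sq]
  have hcl : Subgroup.closure {σ : Perm (Fin n) | σ.IsThreeCycle} ≤
      Subgroup.map (alternatingGroup (Fin n)).subtype χ.ker := by
    rw [Subgroup.closure_le]
    intro σ hσ3
    have hσ3' : σ.IsThreeCycle := hσ3
    have hmem : σ ∈ alternatingGroup (Fin n) := by
      rw [Equiv.Perm.mem_alternatingGroup]; exact hσ3'.sign
    exact ⟨⟨σ, hmem⟩, key σ hσ3' hmem, rfl⟩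
  have hsub : alternatingGroup (Fin n) ≤
      Subgroup.map (alternatingGroup (Fin n)).subtype χ.ker :=
    le_of_eq_of_le Equiv.Perm.closure_three_cycles_eq_alternating.symm hcl
  obtain ⟨g', hg', hgeq⟩ := hsub g.2
  have : g' = g := Subtype.ext hgeq
  rw [← this]; exact hg'

/-- three-cycle with prescribed action -/
lemma threeCycle_spec (x y z : Fin n) (hxy : x ≠ y) (hxz : x ≠ z) (hyz : y ≠ z) :
    ∃ σ : Perm (Fin n), Perm.sign σ = 1 ∧ σ x = y ∧ σ y = z ∧ σ z = x ∧
      ∀ w, w ≠ x → w ≠ y → w ≠ z → σ w = w := by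
  refine ⟨Equiv.swap x z * Equiv.swap x y, ?_, ?_, ?_, ?_, ?_⟩
  · rw [Perm.sign_mul, Perm.sign_swap hxz, Perm.sign_swap hxy]; decide
  · simp [Perm.mul_apply, Equiv.swap_apply_of_ne_of_ne (Ne.symm hxy) hyz]
  · simp [Perm.mul_apply, Equiv.swap_apply_of_ne_of_ne]
  · simp [Perm.mul_apply, Equiv.swap_apply_of_ne_of_ne (Ne.symm hxz) (Ne.symm hyz)]
  · intro w hwx hwy hwz
    simp [Perm.mul_apply, Equiv.swap_apply_of_ne_of_ne hwx hwy,
      Equiv.swap_apply_of_ne_of_ne hwx hwz]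

/-- every abelian normal subgroup of `A n` (for `n ≥ 6`) is trivial -/
lemma abelian_normal_trivial (hn : 6 ≤ n) (N : Subgroup (alternatingGroup (Fin n)))
    (hN : N.Normal) (hab : ∀ g ∈ N, ∀ h ∈ N, g * h = h * g) : N = ⊥ := by
  rw [eq_bot_iff]
  intro g hg
  rw [Subgroup.mem_bot]
  by_contra hg1
  set p : Perm (Fin n) := (g : Perm (Fin n)) with hp
  have hpne : ∃ x, p x ≠ x := by
    by_contra h
    push_neg at h
    exact hg1 (Subtype.ext (Equiv.ext h))
  obtain ⟨x, hx⟩ := hpne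
  set y := p x with hy
  have hyx : y ≠ x := hx
  have claim1 : ∀ u v : Fin n, u ≠ v → u ≠ x → u ≠ y → v ≠ x → v ≠ y →
      (p v = y ∨ p v = u ∨ p v = v) := by
    intro u v huv hux huy hvx hvy
    obtain ⟨c, hcs, hc1, hc2, hc3, hcf⟩ :=
      threeCycle_spec y u v (Ne.symm huy) (Ne.symm hvy) huv
    set C : alternatingGroup (Fin n) :=
      ⟨c, (Equiv.Perm.mem_alternatingGroup).mpr hcs⟩ with hC
    have hg' : C * g * C⁻¹ ∈ N := hN.conj_mem g hg C
    have hcomm := hab g hg _ hg'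
    have hpcomm : p * (c * p * c⁻¹) = (c * p * c⁻¹) * p := by
      have := congrArg (Subgroup.subtype _) hcomm
      simpa using this
    have hcx : c x = x := hcf x (Ne.symm hyx) (Ne.symm hux) (Ne.symm hvx)
    have hcxi : c⁻¹ x = x := by
      conv_lhs => rw [← hcx]
      simp
    have hcyi : c⁻¹ y = v := by
      conv_lhs => rw [← hc3]
      simp
    have heval := congrFun (congrArg (fun (q : Perm (Fin n)) => (q : Fin n → Fin n)) hpcomm) x
    simp only [Perm.coe_mul, Function.comp_apply] at heval
    rw [hcxi, ← hy, hc1, hcyi] at heval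
    by_contra hcon
    push_neg at hcon
    obtain ⟨h1, h2, h3⟩ := hcon
    rw [hcf (p v) h1 (by exact fun hh => h2 hh) h3] at heval
    exact huv (p.injective heval)
  have claim2 : ∀ v, v ≠ x → v ≠ y → p v = v := by
    intro v hvx hvy
    obtain ⟨u1, h1x, h1y, h1v, -, -⟩ := pick_avoid5 hn x y v v v
    obtain ⟨u2, h2x, h2y, h2v, h2u1, -⟩ := pick_avoid5 hn x y v u1 u1
    rcases claim1 u1 v (Ne.symm h1v).symm h1x h1y hvx hvy with h | h | h
    · exact absurd (p.injective (h.trans hy)) hvx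
    · rcases claim1 u2 v (Ne.symm h2v).symm h2x h2y hvx hvy with h' | h' | h'
      · exact absurd (p.injective (h'.trans hy)) hvx
      · exact absurd (h.symm.trans h') (Ne.symm h2u1)
      · exact h'
    · exact h
  have hpyy : p y ≠ y := fun h => hyx (p.injective (h.trans hy))
  have claim3 : p y = x := by
    by_contra h
    exact hpyy (p.injective (claim2 (p y) h hpyy))
  have hfin : p = Equiv.swap x y := by
    apply Equiv.ext
    intro v
    rcases eq_or_ne v x with rfl | hvx
    · rw [Equiv.swap_apply_left, ← hy]
    rcases eq_or_ne v y with rfl | hvy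
    · rw [Equiv.swap_apply_right, claim3]
    · rw [Equiv.swap_apply_of_ne_of_ne hvx hvy, claim2 v hvx hvy]
  have h1 : Perm.sign p = 1 := (Equiv.Perm.mem_alternatingGroup).mp g.2
  rw [hfin, Perm.sign_swap (Ne.symm hyx)] at h1
  exact absurd h1 (by decide)

end GroupAux

/-- An `n`-dimensional idempotent evolution algebra over a field, bundled. -/
structure EvolutionAlgebraData (n : ℕ) : Type 1 where
  k : Type
  X : Type
  [fieldk : Field k]
  [ringX : NonUnitalNonAssocCommRing X]
  [modX : Module k X]
  [sccX : SMulCommClass k X X]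
  [istX : IsScalarTower k X X]
  b : Module.Basis (Fin n) k X
  natural : ∀ i j : Fin n, i ≠ j → b i * b j = 0
  idem : Submodule.span k {z : X | ∃ x y : X, z = x * y} = ⊤

attribute [instance] EvolutionAlgebraData.fieldk EvolutionAlgebraData.ringX
  EvolutionAlgebraData.modX EvolutionAlgebraData.sccX EvolutionAlgebraData.istX

/-- For `n ≥ 6` there is no `n`-dimensional idempotent evolution algebra, over any
field, whose automorphism group is isomorphic to the alternating group `Aₙ`. -/
theorem stmt12 {n : ℕ} (hn : 6 ≤ n) :
    ¬ ∃ (E : EvolutionAlgebraData n)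
        (F : (alternatingGroup (Fin n)) → (E.X ≃ₗ[E.k] E.X)),
      Function.Injective F ∧
      (∀ g, ∀ x y : E.X, F g (x * y) = F g x * F g y) ∧
      (∀ g h, F (g * h) = (F h).trans (F g)) ∧
      (∀ φ : E.X ≃ₗ[E.k] E.X, (∀ x y : E.X, φ (x * y) = φ x * φ y) → ∃ g, F g = φ) := by
  classical
  rintro ⟨E, F, hinj, hmulF, hcomp, hsurj⟩
  set b := E.b with hb
  have hnat := E.natural
  set a : Fin n → Fin n → E.k := fun j i => b.repr (b i * b i) j with ha
  have hbsq : ∀ i, b i * b i = ∑ j, a j i • b j := fun i => (b.sum_repr _).symm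
  -- expansion of a product
  have hexp : ∀ x y : E.X, x * y = ∑ m, (b.repr x m * b.repr y m) • (b m * b m) := by
    intro x y
    conv_lhs => rw [← b.sum_repr x, ← b.sum_repr y]
    rw [Finset.sum_mul_sum]
    refine Finset.sum_congr rfl fun i _ => ?_
    rw [Finset.sum_eq_single i]
    · rw [smul_mul_assoc, mul_smul_comm, smul_smul]
    · intro j _ hij
      rw [smul_mul_assoc, mul_smul_comm, hnat i j (Ne.symm hij), smul_zero, smul_zero]
    · exact fun h => absurd (Finset.mem_univ i) h
  -- the squares are linearly independent
  have hsp : ⊤ ≤ Submodule.span E.k (Set.range fun i => b i * b i) := by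
    rw [← E.idem]
    rw [Submodule.span_le]
    rintro z ⟨x, y, rfl⟩
    rw [hexp x y]
    exact Submodule.sum_mem _ fun m _ =>
      Submodule.smul_mem _ _ (Submodule.subset_span ⟨m, rfl⟩)
  have hsq : LinearIndependent E.k (fun i => b i * b i) :=
    linearIndependent_of_top_le_span_of_card_eq_finrank hsp
      (by rw [Module.finrank_eq_card_basis b, Fintype.card_fin])
  -- coordinate extraction helper
  have hcoord : ∀ (x : Fin n → E.k) (e : Perm (Fin n)) (j : Fin n),
      b.repr (∑ m, x m • b (e m)) (e j) = x j := by
    intro x e j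
    rw [map_sum, Finsupp.finset_sum_apply]
    rw [Finset.sum_eq_single j]
    · simp
    · intro m _ hmj
      simp only [map_smul, Module.Basis.repr_self, Finsupp.smul_apply, Finsupp.single_apply]
      rw [if_neg (fun h => hmj (e.injective h))]
      simp
    · exact fun h => absurd (Finset.mem_univ j) h
  -- every multiplicative automorphism is monomial
  have hperm : ∀ φ : E.X ≃ₗ[E.k] E.X, (∀ x y, φ (x * y) = φ x * φ y) →
      ∃ (σ : Perm (Fin n)) (c : Fin n → E.k),
        (∀ i, c i ≠ 0) ∧ ∀ i, φ (b i) = c i • b (σ i) := by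
    intro φ hφ
    set C : Fin n → Fin n → E.k := fun m i => b.repr (φ (b i)) m with hC
    have h0 : ∀ i j, i ≠ j → ∀ m, C m i * C m j = 0 := by
      intro i j hij m
      have hz : (0 : E.X) = ∑ m, (C m i * C m j) • (b m * b m) := by
        rw [← hexp (φ (b i)) (φ (b j)), ← hφ, hnat i j hij, map_zero]
      exact linearIndependent_iff'.mp hsq Finset.univ (fun m => C m i * C m j)
        hz.symm m (Finset.mem_univ m)
    set t : Fin n → Finset (Fin n) := fun i => Finset.univ.filter fun m => C m i ≠ 0 with ht
    have htne : ∀ i, (t i).Nonempty := by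
      intro i
      by_contra h
      rw [Finset.not_nonempty_iff_eq_empty, Finset.filter_eq_empty_iff] at h
      push_neg at h
      have hrz : b.repr (φ (b i)) = 0 := by
        ext m; exact h (Finset.mem_univ m)
      have : φ (b i) = 0 := by
        have := congrArg b.repr.symm hrz
        simpa using this
      exact b.ne_zero i (by
        have : φ (b i) = φ 0 := by rw [this, map_zero]
        exact φ.injective this)
    have htdisj : ∀ i j, i ≠ j → Disjoint (t i) (t j) := by
      intro i j hij
      rw [Finset.disjoint_left]
      intro m hmi hmj
      rw [ht, Finset.mem_filter] at hmi hmj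
      exact hmj.2 (by
        rcases mul_eq_zero.mp (h0 i j hij m) with h | h
        · exact absurd h hmi.2
        · exact h)
    have hcard1 : ∀ i, (t i).card = 1 := by
      have hsum : ∑ i, (t i).card ≤ n := by
        rw [← Finset.card_biUnion (fun i _ j _ hij => htdisj i j hij)]
        calc ((Finset.univ : Finset (Fin n)).biUnion t).card
            ≤ (Finset.univ : Finset (Fin n)).card := Finset.card_le_univ _
        _ = n := by rw [Finset.card_univ, Fintype.card_fin]
      have hge : ∀ i, 1 ≤ (t i).card := fun i => Finset.card_pos.mpr (htne i)
      intro i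
      by_contra hne
      have h2 : 2 ≤ (t i).card := by have := hge i; omega
      have hsplit : (t i).card + ∑ j ∈ Finset.univ.erase i, (t j).card
          = ∑ j, (t j).card := by
        simpa using Finset.add_sum_erase Finset.univ (fun j => (t j).card) (Finset.mem_univ i)
      have herase : (n - 1 : ℕ) ≤ ∑ j ∈ Finset.univ.erase i, (t j).card := by
        calc (n - 1 : ℕ) = (Finset.univ.erase i).card := by
              rw [Finset.card_erase_of_mem (Finset.mem_univ i), Finset.card_univ,
                Fintype.card_fin]
        _ = ∑ _j ∈ Finset.univ.erase i, 1 := by rw [Finset.sum_const, smul_eq_mul, mul_one]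
        _ ≤ _ := Finset.sum_le_sum fun j _ => hge j
      omega
    choose s0 hs0 using fun i => Finset.card_eq_one.mp (hcard1 i)
    have hs0mem : ∀ i, C (s0 i) i ≠ 0 := by
      intro i
      have : s0 i ∈ t i := by rw [hs0 i]; exact Finset.mem_singleton_self _
      rw [ht, Finset.mem_filter] at this
      exact this.2
    have hCzero : ∀ i m, m ≠ s0 i → C m i = 0 := by
      intro i m hm
      by_contra h
      have : m ∈ t i := by rw [ht, Finset.mem_filter]; exact ⟨Finset.mem_univ m, h⟩
      rw [hs0 i, Finset.mem_singleton] at this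
      exact hm this
    have hs0inj : Function.Injective s0 := by
      intro i j hij
      by_contra hne
      have := htdisj i j hne
      rw [Finset.disjoint_left] at this
      exact this (by rw [hs0 i]; exact Finset.mem_singleton_self _)
        (by rw [hs0 j, hij]; exact Finset.mem_singleton_self _)
    refine ⟨Equiv.ofBijective s0 (Finite.injective_iff_bijective.mp hs0inj),
      fun i => C (s0 i) i, hs0mem, fun i => ?_⟩
    conv_lhs => rw [← b.sum_repr (φ (b i))]
    rw [Finset.sum_eq_single (s0 i)]
    · rfl
    · intro m _ hm
      rw [show b.repr (φ (b i)) m = C m i from rfl, hCzero i m hm, zero_smul]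
    · exact fun h => absurd (Finset.mem_univ _) h
  -- uniqueness of the attached permutation
  have huniq : ∀ (σ σ' : Perm (Fin n)) (c c' : Fin n → E.k), (∀ i, c i ≠ 0) →
      (∀ i, c i • b (σ i) = c' i • b (σ' i)) → σ = σ' := by
    intro σ σ' c c' hc h
    apply Equiv.ext
    intro i
    have h2 := congrArg (fun z => b.repr z (σ i)) (h i)
    simp only [map_smul, Module.Basis.repr_self, Finsupp.smul_apply, Finsupp.single_apply] at h2
    by_contra hne
    simp only [if_true, smul_eq_mul, mul_one] at h2
    rw [if_neg (fun hh => hne hh.symm), mul_zero] at h2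
    exact hc i h2
  -- the structure-constant relation satisfied by monomial automorphisms
  have hrel : ∀ (φ : E.X ≃ₗ[E.k] E.X), (∀ x y, φ (x * y) = φ x * φ y) →
      ∀ (σ : Perm (Fin n)) (c : Fin n → E.k), (∀ i, φ (b i) = c i • b (σ i)) →
      ∀ i j, a j i * c j = c i * c i * a (σ j) (σ i) := by
    intro φ hφ σ c hφb i j
    have h1 : φ (b i * b i) = ∑ m, (a m i * c m) • b (σ m) := by
      rw [hbsq i, map_sum]
      refine Finset.sum_congr rfl fun m _ => ?_
      rw [map_smul, hφb m, smul_smul]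
    have h2 : φ (b i * b i) = ∑ m, (c i * c i * a m (σ i)) • b m := by
      rw [hφ, hφb i, smul_mul_assoc, mul_smul_comm, hbsq (σ i), Finset.smul_sum,
        Finset.smul_sum]
      refine Finset.sum_congr rfl fun m _ => ?_
      rw [smul_smul, smul_smul, mul_assoc]
    have h3 := congrArg (fun z => b.repr z (σ j)) (h1.symm.trans h2)
    rw [hcoord (fun m => a m i * c m) σ j] at h3
    have h4 : b.repr (∑ m, (c i * c i * a m (σ i)) • b m) (σ j)
        = c i * c i * a (σ j) (σ i) := hcoord (fun m => c i * c i * a m (σ i)) 1 (σ j)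
    rw [h4] at h3
    exact h3
  -- construction of a monomial automorphism from permutation data
  have hconstr : ∀ (σ : Perm (Fin n)) (c : Fin n → E.k), (∀ i, c i ≠ 0) →
      (∀ i j, a j i * c j = c i * c i * a (σ j) (σ i)) →
      ∃ φ : E.X ≃ₗ[E.k] E.X, (∀ x y, φ (x * y) = φ x * φ y) ∧
        ∀ i, φ (b i) = c i • b (σ i) := by
    intro σ c hc hrc
    set f : E.X →ₗ[E.k] E.X := b.constr (M' := E.X) E.k (fun i => c i • b (σ i)) with hf
    set g : E.X →ₗ[E.k] E.X :=
      b.constr (M' := E.X) E.k (fun i => (c (σ.symm i))⁻¹ • b (σ.symm i)) with hg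
    have hfb : ∀ i, f (b i) = c i • b (σ i) := fun i => b.constr_basis E.k _ i
    have hgb : ∀ i, g (b i) = (c (σ.symm i))⁻¹ • b (σ.symm i) := fun i =>
      b.constr_basis E.k _ i
    have hfg : f.comp g = LinearMap.id := by
      apply b.ext
      intro i
      rw [LinearMap.comp_apply, hgb i, map_smul, hfb (σ.symm i), smul_smul,
        Equiv.apply_symm_apply, inv_mul_cancel₀ (hc _), one_smul, LinearMap.id_apply]
    have hgf : g.comp f = LinearMap.id := by
      apply b.ext
      intro i
      rw [LinearMap.comp_apply, hfb i, map_smul, hgb (σ i), smul_smul,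
        Equiv.symm_apply_apply, mul_inv_cancel₀ (hc _), one_smul, LinearMap.id_apply]
    set φ : E.X ≃ₗ[E.k] E.X := LinearEquiv.ofLinear f g hfg hgf with hφ
    have hφap : ∀ x, φ x = f x := fun x => rfl
    have hBmul : ((LinearMap.mul E.k E.X).compr₂ f) = (LinearMap.mul E.k E.X).compl₁₂ f f := by
      apply LinearMap.ext_basis b b
      intro i j
      simp only [LinearMap.compr₂_apply, LinearMap.compl₁₂_apply, LinearMap.mul_apply']
      rcases eq_or_ne i j with rfl | hij
      · rw [hfb i, hbsq i, map_sum, smul_mul_assoc, mul_smul_comm, hbsq (σ i),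
          Finset.smul_sum, Finset.smul_sum, ← Equiv.sum_comp σ
            (fun m => c i • c i • a m (σ i) • b m)]
        refine Finset.sum_congr rfl fun m _ => ?_
        rw [map_smul, hfb m, smul_smul, smul_smul, smul_smul, hrc i m, mul_assoc]
      · rw [hnat i j hij, map_zero, hfb i, hfb j, smul_mul_assoc, mul_smul_comm,
          hnat (σ i) (σ j) (fun h => hij (σ.injective h)), smul_zero, smul_zero]
    refine ⟨φ, fun x y => ?_, fun i => by rw [hφap, hfb i]⟩
    have := congrArg (fun B => (B : E.X →ₗ[E.k] E.X →ₗ[E.k] E.X) x y) hBmul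
    simp only [LinearMap.compr₂_apply, LinearMap.compl₁₂_apply, LinearMap.mul_apply'] at this
    rw [hφap, hφap, hφap]
    exact this
  -- attach permutations to the automorphisms F g
  choose σof cof hcnz hφb using fun g : alternatingGroup (Fin n) => hperm (F g) (hmulF g)
  have hF1 : ∀ x, F 1 x = x := by
    intro x
    have h := hcomp 1 1
    rw [mul_one] at h
    have := congrArg (fun (e : E.X ≃ₗ[E.k] E.X) => e x) h
    simp only [LinearEquiv.trans_apply] at this
    exact ((F 1).injective this).symm
  have hσ1 : σof 1 = 1 := by
    apply huniq (σof 1) 1 (cof 1) (fun _ => 1) (hcnz 1)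
    intro i
    rw [← hφb 1 i, hF1 (b i), one_smul]
    rfl
  have hσmul : ∀ g h, σof (g * h) = σof g * σof h := by
    intro g h
    apply huniq _ _ (cof (g * h)) (fun i => cof h i * cof g (σof h i)) (hcnz _)
    intro i
    rw [← hφb (g * h) i]
    have := congrArg (fun (e : E.X ≃ₗ[E.k] E.X) => e (b i)) (hcomp g h)
    simp only [LinearEquiv.trans_apply] at this
    rw [this, hφb h i, map_smul, hφb g (σof h i), smul_smul]
    rfl
  set ψ : alternatingGroup (Fin n) →* Perm (Fin n) :=
    { toFun := σof, map_one' := hσ1, map_mul' := hσmul } with hψ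
  have hψab : ∀ g ∈ ψ.ker, ∀ h ∈ ψ.ker, g * h = h * g := by
    intro g hg h hh
    rw [MonoidHom.mem_ker] at hg hh
    have hgb : ∀ i, F g (b i) = cof g i • b i := by
      intro i
      rw [hφb g i]
      have : σof g i = i := by rw [show σof g = ψ g from rfl, hg]; rfl
      rw [this]
    have hhb : ∀ i, F h (b i) = cof h i • b i := by
      intro i
      rw [hφb h i]
      have : σof h i = i := by rw [show σof h = ψ h from rfl, hh]; rfl
      rw [this]
    apply hinj
    apply LinearEquiv.toLinearMap_injective
    apply b.ext
    intro i
    have e1 := congrArg (fun (e : E.X ≃ₗ[E.k] E.X) => e (b i)) (hcomp g h)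
    have e2 := congrArg (fun (e : E.X ≃ₗ[E.k] E.X) => e (b i)) (hcomp h g)
    simp only [LinearEquiv.trans_apply] at e1 e2
    simp only [LinearEquiv.coe_coe]
    rw [e1, e2, hhb i, hgb i, map_smul, map_smul, hgb i, hhb i, smul_smul, smul_smul,
      mul_comm]
  have hker : ψ.ker = ⊥ :=
    abelian_normal_trivial hn ψ.ker (MonoidHom.normal_ker ψ) hψab
  have hψinj : Function.Injective ψ := by
    rw [← ψ.ker_eq_bot_iff]
    exact hker
  have hsign : ∀ g, Perm.sign (σof g) = 1 := by
    intro g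
    have := hom_to_units_trivial (Equiv.Perm.sign.comp ψ) g
    exact this
  have hψ'surj : ∀ σ : Perm (Fin n), Perm.sign σ = 1 → ∃ g, σof g = σ := by
    set ψ' : alternatingGroup (Fin n) → alternatingGroup (Fin n) :=
      fun g => ⟨σof g, (Equiv.Perm.mem_alternatingGroup).mpr (hsign g)⟩ with hψ'
    have hψ'inj : Function.Injective ψ' := by
      intro g h e
      exact hψinj (congrArg Subtype.val e)
    have := Finite.injective_iff_surjective.mp hψ'inj
    intro σ hσ
    obtain ⟨g, hg⟩ := this ⟨σ, (Equiv.Perm.mem_alternatingGroup).mpr hσ⟩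
    exact ⟨g, congrArg Subtype.val hg⟩
  -- every even permutation lifts
  have Hlift : ∀ σ : Perm (Fin n), Perm.sign σ = 1 →
      ∃ c : Fin n → E.k, (∀ i, c i ≠ 0) ∧
        ∀ i j, a j i * c j = c i * c i * a (σ j) (σ i) := by
    intro σ hσ
    obtain ⟨g, hg⟩ := hψ'surj σ hσ
    refine ⟨cof g, hcnz g, ?_⟩
    have := hrel (F g) (hmulF g) (σof g) (cof g) (hφb g)
    rw [hg] at this
    exact this
  -- the odd permutation we shall lift
  have hn0 : 0 < n := by omega
  set i0 : Fin n := ⟨0, by omega⟩ with hi0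
  set i1 : Fin n := ⟨1, by omega⟩ with hi1
  have h01 : i0 ≠ i1 := by
    rw [hi0, hi1]
    intro h
    exact absurd (congrArg Fin.val h) (by norm_num)
  set τ : Perm (Fin n) := Equiv.swap i0 i1 with hτ
  -- a lift of the odd permutation τ yields a contradiction
  have hfinal : ∀ c : Fin n → E.k, (∀ i, c i ≠ 0) →
      (∀ i j, a j i * c j = c i * c i * a (τ j) (τ i)) → False := by
    intro c hc hrc
    obtain ⟨φ, hφm, hφbs⟩ := hconstr τ c hc hrc
    obtain ⟨g, hg⟩ := hsurj φ hφm
    have heq : σof g = τ := huniq (σof g) τ (cof g) c (hcnz g) (fun i => by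
      rw [← hφb g i, hg, hφbs i])
    have h1 := hsign g
    rw [heq, hτ, Perm.sign_swap h01] at h1
    exact absurd h1 (by decide)
  by_cases hex : ∃ p q : Fin n, p ≠ q ∧ a q p ≠ 0
  · -- all off-diagonal entries are nonzero
    obtain ⟨p, q, hpq, hapq⟩ := hex
    have hoff : ∀ i j : Fin n, i ≠ j → a j i ≠ 0 := by
      intro i j hij
      obtain ⟨σ, hσs, hσp, hσq⟩ := even_two_trans hn p q i j hpq hij
      obtain ⟨c, hc, hrc⟩ := Hlift σ hσs
      have h := hrc p q
      rw [hσp, hσq] at h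
      intro h0
      rw [h0, mul_zero] at h
      exact (mul_ne_zero hapq (hc q)) h
    -- scalars at three fixed points of a lift are 1
    have hfix1 : ∀ (σ : Perm (Fin n)) (c : Fin n → E.k), (∀ i, c i ≠ 0) →
        (∀ i j, a j i * c j = c i * c i * a (σ j) (σ i)) →
        ∀ f g h : Fin n, f ≠ g → f ≠ h → g ≠ h → σ f = f → σ g = g → σ h = h →
          c f = 1 := by
      intro σ c hc hrc f g h hfg hfh hgh hsf hsg hsh
      have e1 := hrc f g
      rw [hsf, hsg] at e1
      have e2 := hrc f h
      rw [hsf, hsh] at e2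
      have e3 := hrc h g
      rw [hsh, hsg] at e3
      have e4 := hrc g f
      rw [hsf, hsg] at e4
      have hgf0 : a g f ≠ 0 := hoff f g hfg
      have hhf0 : a h f ≠ 0 := hoff f h hfh
      have hgh0 : a g h ≠ 0 := hoff h g (Ne.symm hgh)
      have hfg0 : a f g ≠ 0 := hoff g f (Ne.symm hfg)
      have hcg : c g = c f * c f := mul_right_cancel₀ hgf0 (by linear_combination e1)
      have hch : c h = c f * c f := mul_right_cancel₀ hhf0 (by linear_combination e2)
      have hcgh : c g = c h * c h := mul_right_cancel₀ hgh0 (by linear_combination e3)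
      have h7 : (c f * c f) * 1 = (c f * c f) * (c f * c f) := by
        linear_combination hcgh - hcg + (c h + c f * c f) * hch
      have hcf2 : (1 : E.k) = c f * c f :=
        mul_left_cancel₀ (mul_ne_zero (hc f) (hc f)) h7
      have hcf : c f = c g * c g := mul_right_cancel₀ hfg0 (by linear_combination e4)
      calc c f = c g * c g := hcf
      _ = (c f * c f) * (c f * c f) := by rw [hcg]
      _ = 1 := by rw [← hcf2, one_mul]
    -- the potential function g
    have hW : ∀ x : Fin n, ∃ f : Fin n, f ≠ i0 ∧ f ≠ x := by
      intro x
      obtain ⟨z, h1, h2, -, -, -⟩ := pick_avoid5 hn i0 x x x x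
      exact ⟨z, h1, h2⟩
    choose w hw1 hw2 using hW
    obtain ⟨gfun, hgfun⟩ : ∃ gf : Fin n → E.k, gf = fun x => a x (w x) / a i0 (w x) :=
      ⟨_, rfl⟩
    have gnz : ∀ x, gfun x ≠ 0 := fun x => by
      rw [hgfun]
      exact div_ne_zero (hoff (w x) x (hw2 x)) (hoff (w x) i0 (hw1 x))
    -- ratio independence
    have hR : ∀ x y f f' : Fin n, x ≠ y → f ≠ x → f ≠ y → f' ≠ x → f' ≠ y →
        a y f * a x f' = a y f' * a x f := by
      intro x y f f' hxy hfx hfy hf'x hf'y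
      rcases eq_or_ne f f' with rfl | hff'
      · ring
      obtain ⟨z, hzx, hzy, hzf, hzf', -⟩ := pick_avoid5 hn x y f f' f'
      obtain ⟨σ, hσs, hσx, hσy, hσz, hσfix⟩ :=
        threeCycle_spec x y z hxy (Ne.symm hzx) (Ne.symm hzy)
      obtain ⟨c, hc, hrc⟩ := Hlift σ hσs
      obtain ⟨h2, h2x, h2y, h2z, h2f, h2f'⟩ := pick_avoid5 hn x y z f f'
      have hσf : σ f = f := hσfix f hfx hfy (Ne.symm hzf)
      have hσf' : σ f' = f' := hσfix f' hf'x hf'y (Ne.symm hzf')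
      have hσh2 : σ h2 = h2 := hσfix h2 h2x h2y h2z
      have hcf : c f = 1 := hfix1 σ c hc hrc f f' h2 hff' (Ne.symm h2f) (Ne.symm h2f')
        hσf hσf' hσh2
      have hcf' : c f' = 1 := hfix1 σ c hc hrc f' f h2 (Ne.symm hff') (Ne.symm h2f')
        (Ne.symm h2f) hσf' hσf hσh2
      have e1 := hrc f x
      rw [hσx, hσf, hcf] at e1
      have e2 := hrc f' x
      rw [hσx, hσf', hcf'] at e2
      linear_combination a x f * e2 - a x f' * e1
    have hG' : ∀ x f : Fin n, f ≠ x → f ≠ i0 → gfun x = a x f / a i0 f := by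
      intro x f hfx hf0
      rcases eq_or_ne x i0 with rfl | hx0
      · simp only [hgfun]
        rw [div_self (hoff (w i0) i0 (hw1 i0)), div_self (hoff f i0 hf0)]
      · have h := hR i0 x (w x) f (Ne.symm hx0) (hw1 x) (hw2 x) hf0 hfx
        simp only [hgfun]
        rw [div_eq_div_iff (hoff (w x) i0 (hw1 x)) (hoff f i0 hf0)]
        linear_combination h
    have hG : ∀ x y f : Fin n, x ≠ y → f ≠ x → f ≠ y →
        a y f * gfun x = a x f * gfun y := by
      intro x y f hxy hfx hfy
      rcases eq_or_ne f i0 with rfl | hf0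
      · obtain ⟨f', hf'x, hf'y, hf'0, -, -⟩ := pick_avoid5 hn x y i0 i0 i0
        rw [hG' x f' hf'x hf'0, hG' y f' hf'y hf'0]
        have h0 := hoff f' i0 hf'0
        have h := hR x y i0 f' hxy hfx hfy hf'x hf'y
        field_simp
        linear_combination h
      · rw [hG' x f hfx hf0, hG' y f hfy hf0]
        have h0 := hoff f i0 hf0
        field_simp
    -- column relation
    have hCol : ∀ x y ww : Fin n, y ≠ x → y ≠ ww → x ≠ ww →
        a y x * (gfun x * gfun x) = a y ww * (gfun ww * gfun ww) := by
      intro x y ww hyx hyw hxw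
      obtain ⟨z, hzx, hzw, hzy, -, -⟩ := pick_avoid5 hn x ww y y y
      obtain ⟨σ, hσs, hσx, hσw, hσz, hσfix⟩ :=
        threeCycle_spec x ww z hxw (Ne.symm hzx) (Ne.symm hzw)
      obtain ⟨c, hc, hrc⟩ := Hlift σ hσs
      obtain ⟨g1, hg1x, hg1w, hg1z, hg1y, -⟩ := pick_avoid5 hn x ww z y y
      obtain ⟨g2, hg2x, hg2w, hg2z, hg2y, hg2g1⟩ := pick_avoid5 hn x ww z y g1
      have hσy : σ y = y := hσfix y hyx hyw (Ne.symm hzy)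
      have hcy : c y = 1 := hfix1 σ c hc hrc y g1 g2 (Ne.symm hg1y) (Ne.symm hg2y)
        (Ne.symm hg2g1) hσy (hσfix g1 hg1x hg1w hg1z) (hσfix g2 hg2x hg2w hg2z)
      have e1 := hrc y x
      rw [hσx, hσy, hcy] at e1
      have e2 := hrc x y
      rw [hσx, hσy, hcy] at e2
      have e3 := hG x ww y hxw hyx hyw
      have hxy0 : a x y ≠ 0 := hoff y x hyx
      have hcx : c x * gfun x = gfun ww := mul_left_cancel₀ hxy0
        (by linear_combination gfun x * e1 + e3)
      linear_combination (gfun x * gfun x) * e2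
        + a y ww * (c x * gfun x + gfun ww) * hcx
    -- diagonal relation
    have hDiag : ∀ x y : Fin n, a x x * gfun x = a y y * gfun y := by
      intro x y
      rcases eq_or_ne x y with rfl | hxy
      · rfl
      obtain ⟨z, hzx, hzy, -, -, -⟩ := pick_avoid5 hn x y y y y
      obtain ⟨σ, hσs, hσx, hσy, hσz, hσfix⟩ :=
        threeCycle_spec x y z hxy (Ne.symm hzx) (Ne.symm hzy)
      obtain ⟨c, hc, hrc⟩ := Hlift σ hσs
      obtain ⟨f, hfx, hfy, hfz, -, -⟩ := pick_avoid5 hn x y z z z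
      obtain ⟨g1, hg1x, hg1y, hg1z, hg1f, -⟩ := pick_avoid5 hn x y z f f
      obtain ⟨g2, hg2x, hg2y, hg2z, hg2f, hg2g1⟩ := pick_avoid5 hn x y z f g1
      have hσf : σ f = f := hσfix f hfx hfy hfz
      have hcf : c f = 1 := hfix1 σ c hc hrc f g1 g2 (Ne.symm hg1f) (Ne.symm hg2f)
        (Ne.symm hg2g1) hσf (hσfix g1 hg1x hg1y hg1z) (hσfix g2 hg2x hg2y hg2z)
      have e1 := hrc f x
      rw [hσx, hσf, hcf] at e1
      have e2 := hrc x x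
      rw [hσx] at e2
      have e3 := hG x y f hxy hfx hfy
      have hxf0 : a x f ≠ 0 := hoff f x hfx
      have hcx : c x * gfun x = gfun y := mul_left_cancel₀ hxf0
        (by linear_combination gfun x * e1 + e3)
      have e4 : a x x = c x * a y y := mul_right_cancel₀ (hc x) (by linear_combination e2)
      calc a x x * gfun x = a y y * (c x * gfun x) := by rw [e4]; ring
      _ = a y y * gfun y := by rw [hcx]
    -- the master invariant
    have hNf : ∀ i j i' j' : Fin n, j ≠ i → j' ≠ i' →
        a j i * (gfun i * gfun i) * gfun j' = a j' i' * (gfun i' * gfun i') * gfun j := by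
      intro i j i' j' hji hj'i'
      obtain ⟨ww, hwi, hwj, hwi', hwj', -⟩ := pick_avoid5 hn i j i' j' j'
      obtain ⟨ww', hw'i, hw'j, hw'i', hw'j', hw'w⟩ := pick_avoid5 hn i j i' j' ww
      have s1 : a ww i * gfun j = a j i * gfun ww :=
        hG j ww i (Ne.symm hwj) (Ne.symm hji) (Ne.symm hwi)
      have s2 : a ww i * (gfun i * gfun i) = a ww ww' * (gfun ww' * gfun ww') :=
        hCol i ww ww' hwi (Ne.symm hw'w) (Ne.symm hw'i)
      have s3 : a j' ww' * gfun ww = a ww ww' * gfun j' :=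
        hG ww j' ww' hwj' hw'w hw'j'
      have s4 : a j' ww' * (gfun ww' * gfun ww') = a j' i' * (gfun i' * gfun i') :=
        hCol ww' j' i' (Ne.symm hw'j') hj'i' hw'i'
      apply mul_left_cancel₀ (gnz ww)
      linear_combination (-(gfun i * gfun i * gfun j')) * s1 + (gfun j * gfun j') * s2
        + (-(gfun j * gfun ww' * gfun ww')) * s3 + (gfun j * gfun ww) * s4
    -- build the lift of the odd permutation τ
    apply hfinal (fun i => gfun (τ i) / gfun i)
      (fun i => div_ne_zero (gnz (τ i)) (gnz i))
    intro i j
    rcases eq_or_ne i j with rfl | hij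
    · have h := hDiag i (τ i)
      have h1 := gnz i
      have h2 := gnz (τ i)
      rw [div_mul_div_comm, ← mul_div_assoc, div_mul_eq_mul_div,
        div_eq_div_iff h1 (mul_ne_zero h1 h1)]
      linear_combination gfun (τ i) * gfun i * h
    · have hji : (τ j : Fin n) ≠ τ i := fun hh => hij (τ.injective hh).symm
      have h := hNf i j (τ i) (τ j) (Ne.symm hij) hji
      have h1 := gnz i
      have h2 := gnz (τ i)
      have h3 := gnz j
      have h4 := gnz (τ j)
      rw [div_mul_div_comm, ← mul_div_assoc, div_mul_eq_mul_div,
        div_eq_div_iff h3 (mul_ne_zero h1 h1)]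
      linear_combination h
  · -- all off-diagonal entries vanish
    push_neg at hex
    have hsq_eq : ∀ i, b i * b i = a i i • b i := by
      intro i
      rw [hbsq i, Finset.sum_eq_single i]
      · intro j _ hj
        rw [hex i j (fun h => hj h.symm), zero_smul]
      · exact fun h => absurd (Finset.mem_univ i) h
    have hdiag : ∀ i, a i i ≠ 0 := by
      intro i hai
      have h := hsq.ne_zero i
      rw [hsq_eq i, hai, zero_smul] at h
      exact h rfl
    apply hfinal (fun i => a i i / a (τ i) (τ i))
      (fun i => div_ne_zero (hdiag i) (hdiag (τ i)))
    intro i j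
    rcases eq_or_ne i j with rfl | hij
    · have ht := hdiag (τ i)
      field_simp
    · rw [hex i j hij, hex (τ i) (τ j) (fun h => hij (τ.injective h)), zero_mul, mul_zero]
end

section
/- A finite-dimensional evolution algebra X is idempotent (X² = X) if and only if its structure matrix relative to any natural basis is invertible. -/
/-- A finite-dimensional evolution algebra is idempotent (`X² = X`) iff its structure
matrix relative to any natural basis is invertible. -/
theorem stmt13 {k X : Type*} [Field k] [NonUnitalNonAssocCommRing X]
    [Module k X] [SMulCommClass k X X] [IsScalarTower k X X]
    {n : ℕ} (b : Module.Basis (Fin n) k X)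
    (hnat : ∀ i j : Fin n, i ≠ j → b i * b j = 0)
    (μ : Matrix (Fin n) (Fin n) k) (hμ : ∀ i, b i * b i = ∑ j, μ i j • b j) :
    Submodule.span k {z : X | ∃ x y : X, z = x * y} = ⊤ ↔ IsUnit μ := by
  -- The span of all products equals the span of the squares of basis vectors.
  have hspan : Submodule.span k {z : X | ∃ x y : X, z = x * y}
      = Submodule.span k (Set.range fun i => b i * b i) := by
    apply le_antisymm
    · rw [Submodule.span_le]
      rintro z ⟨x, y, rfl⟩
      have hx := b.sum_repr x
      have hy := b.sum_repr y
      have : x * y = ∑ i, (b.repr x i * b.repr y i) • (b i * b i) := by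
        conv_lhs => rw [← hx, ← hy]
        rw [Finset.sum_mul]
        refine Finset.sum_congr rfl fun i _ => ?_
        rw [Finset.mul_sum]
        rw [Finset.sum_eq_single i]
        · rw [smul_mul_smul_comm]
        · intro j _ hj
          rw [smul_mul_smul_comm, hnat i j (Ne.symm hj), smul_zero]
        · intro h; exact absurd (Finset.mem_univ i) h
      rw [this]
      exact Submodule.sum_mem _ fun i _ =>
        Submodule.smul_mem _ _ (Submodule.subset_span ⟨i, rfl⟩)
    · rw [Submodule.span_le]
      rintro z ⟨i, rfl⟩
      exact Submodule.subset_span ⟨b i, b i, rfl⟩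
  rw [hspan]
  -- the linear map sending `v` to `b.equivFun.symm (v ᵥ* μ)`
  set f : (Fin n → k) →ₗ[k] X :=
    (b.equivFun.symm.toLinearMap) ∘ₗ μ.vecMulLinear with hf
  have hfi : ∀ i, f (Pi.single i 1) = b i * b i := by
    intro i
    have h1 : Matrix.vecMul (Pi.single i 1) μ = μ i := by
      ext j
      simp [Matrix.vecMul, dotProduct, Pi.single_apply]
    simp only [hf, LinearMap.comp_apply, Matrix.vecMulLinear_apply, h1,
      LinearEquiv.coe_coe, Module.Basis.equivFun_symm_apply]
    rw [hμ i]
  have hrange : LinearMap.range f = Submodule.span k (Set.range fun i => b i * b i) := by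
    rw [LinearMap.range_eq_map, ← (Pi.basisFun k (Fin n)).span_eq,
      Submodule.map_span, ← Set.range_comp]
    congr 1
    ext z
    constructor
    · rintro ⟨i, rfl⟩; exact ⟨i, by simp [Pi.basisFun_apply, hfi i]⟩
    · rintro ⟨i, rfl⟩; exact ⟨i, by simp [Pi.basisFun_apply, hfi i]⟩
  rw [← hrange, LinearMap.range_eq_top]
  have : Function.Surjective f ↔ Function.Surjective μ.vecMul := by
    constructor
    · intro h v
      obtain ⟨w, hw⟩ := h (b.equivFun.symm v)
      exact ⟨w, b.equivFun.symm.injective (by simpa [hf] using hw)⟩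
    · intro h x
      obtain ⟨w, hw⟩ := h (b.equivFun x)
      refine ⟨w, ?_⟩
      simp [hf, hw, Module.Basis.sum_repr]
  rw [this, Matrix.vecMul_surjective_iff_isUnit]
end

section
/- Let G be a finite graph in which every vertex has degree at least 2, with vertex set partitioned as V ∪ (V(G)∖V) where V is Aut(G)-invariant and |V| ≥ 1. Define an algebra X over a field k with basis {b_v : v ∈ V(G)} ∪ {b_e : e ∈ E(G)}, where b_v² = b_v for v ∈ V, b_v² = b_v + Σ_{w∈V} b_w for v ∈ V(G)∖V, b_e² = b_e + b_u + b_w for e = {u,w}, and all other products of distinct basis elements are zero. Then X is an idempotent evolution algebra and Aut(X) ≅ Aut(G), with the isomorphism sending a graph automorphism σ to the algebra automorphism b_v ↦ b_{σ(v)}, b_e ↦ b_{σ(e)}. -/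
set_option linter.unusedSectionVars false

section
variable {k X : Type*} [Field k] [NonUnitalNonAssocCommRing X]
    [Module k X] [SMulCommClass k X X] [IsScalarTower k X X]
    {ι : Type*} [Fintype ι] [DecidableEq ι]
    (b : Module.Basis ι k X)

private lemma mul_repr' (hnat : ∀ p q : ι, p ≠ q → b p * b q = 0) (x y : X) :
    x * y = ∑ p, ((b.repr x p) * (b.repr y p)) • (b p * b p) := by
  conv_lhs => rw [← b.sum_repr x, ← b.sum_repr y]
  rw [Finset.sum_mul_sum]
  rw [Finset.sum_congr rfl (fun p _ => Finset.sum_eq_single p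
    (fun q _ hq => by rw [smul_mul_smul_comm, hnat p q (fun h => hq h.symm), smul_zero]) (by simp))]
  · exact Finset.sum_congr rfl fun p _ => by rw [smul_mul_smul_comm, mul_smul]

private lemma sq_indep' (c : ι → X) (hsq : ∀ p, b p * b p = b p + c p)
    (hN3 : (b.constr k c : Module.End k X) * b.constr k c * b.constr k c = 0)
    (t : ι → k) (h : ∑ p, t p • (b p * b p) = 0) : ∀ p, t p = 0 := by
  set N : Module.End k X := b.constr k c with hN
  have key : (1 - N + N * N) * (1 + N) = 1 := by
    have : (1 - N + N * N) * (1 + N) = 1 + N * N * N := by noncomm_ring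
    rw [this, hN3, add_zero]
  have hL : Function.Injective (1 + N : Module.End k X) := by
    intro x y hxy
    have := congrArg (1 - N + N * N : Module.End k X) hxy
    calc x = ((1 - N + N * N) * (1 + N)) x := by rw [key]; rfl
    _ = ((1 - N + N * N) * (1 + N)) y := this
    _ = y := by rw [key]; rfl
  have hz : ∑ p, t p • b p = 0 := by
    apply hL
    rw [map_sum, map_zero, ← h]
    refine Finset.sum_congr rfl fun p _ => ?_
    rw [map_smul, hsq p]
    show t p • (b p + N (b p)) = _
    rw [hN, Module.Basis.constr_basis]
  exact Fintype.linearIndependent_iff.mp b.linearIndependent t hz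

private lemma mul_zero_iff' (hnat : ∀ p q : ι, p ≠ q → b p * b q = 0)
    (c : ι → X) (hsq : ∀ p, b p * b p = b p + c p)
    (hN3 : (b.constr k c : Module.End k X) * b.constr k c * b.constr k c = 0)
    (x y : X) : x * y = 0 ↔ ∀ p, b.repr x p * b.repr y p = 0 := by
  constructor
  · intro h
    refine sq_indep' b c hsq hN3 _ ?_
    rw [← mul_repr' b hnat x y, h]
  · intro h
    rw [mul_repr' b hnat x y]
    refine Finset.sum_eq_zero fun p _ => by rw [h p, zero_smul]

private lemma perm_basis' (hnat : ∀ p q : ι, p ≠ q → b p * b q = 0)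
    (c : ι → X) (hsq : ∀ p, b p * b p = b p + c p)
    (hN3 : (b.constr k c : Module.End k X) * b.constr k c * b.constr k c = 0)
    (φ : X ≃ₗ[k] X) (hφ : ∀ x y : X, φ (x * y) = φ x * φ y) :
    ∃ (π : ι ≃ ι) (a : ι → k), (∀ p, a p ≠ 0) ∧ ∀ p, φ (b p) = a p • b (π p) := by
  classical
  set R : ι → Finset ι := fun p => (b.repr (φ (b p))).support with hR
  have hdisj : ∀ p q, p ≠ q → Disjoint (R p) (R q) := by
    intro p q hpq
    have h0 : φ (b p) * φ (b q) = 0 := by rw [← hφ, hnat p q hpq, map_zero]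
    have := (mul_zero_iff' b hnat c hsq hN3 _ _).mp h0
    rw [Finset.disjoint_left]
    intro r hr hq
    rcases mul_eq_zero.mp (this r) with h | h
    · exact (Finsupp.mem_support_iff.mp hr) h
    · exact (Finsupp.mem_support_iff.mp hq) h
  have hne : ∀ p, (R p).Nonempty := by
    intro p
    rw [Finset.nonempty_iff_ne_empty]
    intro hempty
    have : b.repr (φ (b p)) = 0 := Finsupp.support_eq_empty.mp hempty
    have : φ (b p) = 0 := by
      have := congrArg b.repr.symm this
      simpa using this
    exact b.ne_zero p (φ.injective (by simpa using this))
  have hcard : ∀ p, (R p).card = 1 := by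
    have hsum : ∑ p, (R p).card ≤ Fintype.card ι := by
      rw [← Finset.card_biUnion (fun p _ q _ h => hdisj p q h)]
      exact Finset.card_le_univ _
    by_contra hcon
    push_neg at hcon
    obtain ⟨p0, hp0⟩ := hcon
    have h2 : 2 ≤ (R p0).card := by
      have := (hne p0).card_pos
      omega
    have : Fintype.card ι < ∑ p, (R p).card := by
      calc Fintype.card ι = ∑ _p : ι, 1 := by simp
      _ < ∑ p, (R p).card := by
        refine Finset.sum_lt_sum (fun i _ => (hne i).card_pos) ⟨p0, Finset.mem_univ _, h2⟩
    omega
  choose q hq using fun p => Finset.card_eq_one.mp (hcard p)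
  have hval : ∀ p, φ (b p) = (b.repr (φ (b p)) (q p)) • b (q p) := by
    intro p
    have hss : (b.repr (φ (b p))).support ⊆ {q p} := by rw [← hq p]
    have := Finsupp.support_subset_singleton.mp hss
    apply b.repr.injective
    rw [this]
    simp [Finsupp.smul_single]
  have hinj : Function.Injective q := by
    intro p p' h
    by_contra hne'
    have := hdisj p p' hne'
    rw [hq p, hq p', h] at this
    simp at this
  refine ⟨Equiv.ofBijective q (Finite.injective_iff_bijective.mp hinj), fun p => b.repr (φ (b p)) (q p), fun p => ?_, fun p => hval p⟩
  intro h0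
  have : q p ∈ R p := by rw [hq p]; exact Finset.mem_singleton_self _
  exact (Finsupp.mem_support_iff.mp this) h0

end

/-- The graph construction: if `X` has a natural basis indexed by the vertices and
edges of a finite graph `Γ` (all vertices of degree ≥ 2), with distinguished
`Aut(Γ)`-invariant nonempty vertex set `S`, and squares
`b_v² = b_v` for `v ∈ S`, `b_v² = b_v + ∑_{w ∈ S} b_w` for `v ∉ S`, and
`b_e² = b_e + b_u + b_w` for each edge `e = {u,w}`, then `X` is an idempotent
evolution algebra and `Aut(X) ≅ Aut(Γ)` via `b_v ↦ b_{σ(v)}`, `b_e ↦ b_{σ(e)}`. -/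
theorem stmt17 {k X : Type*} [Field k] [NonUnitalNonAssocCommRing X]
    [Module k X] [SMulCommClass k X X] [IsScalarTower k X X]
    {V : Type*} [Fintype V] [DecidableEq V]
    (Γ : SimpleGraph V) [DecidableRel Γ.Adj]
    (S : Finset V) (hS : S.Nonempty)
    (hSinv : ∀ g : Γ ≃g Γ, ∀ v ∈ S, g v ∈ S)
    (hdeg : ∀ v : V, 2 ≤ Γ.degree v)
    (b : Module.Basis (V ⊕ Γ.edgeSet) k X)
    (hnat : ∀ p q : V ⊕ Γ.edgeSet, p ≠ q → b p * b q = 0)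
    (hsq1 : ∀ v ∈ S, b (Sum.inl v) * b (Sum.inl v) = b (Sum.inl v))
    (hsq2 : ∀ v ∉ S, b (Sum.inl v) * b (Sum.inl v) =
      b (Sum.inl v) + ∑ w ∈ S, b (Sum.inl w))
    (hsq3 : ∀ (e : Γ.edgeSet) (u w : V), (e : Sym2 V) = s(u, w) →
      b (Sum.inr e) * b (Sum.inr e) = b (Sum.inr e) + b (Sum.inl u) + b (Sum.inl w)) :
    Submodule.span k {z : X | ∃ x y : X, z = x * y} = ⊤ ∧
    ∃ F : (Γ ≃g Γ) → (X ≃ₗ[k] X),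
      Function.Injective F ∧
      (∀ g, ∀ x y : X, F g (x * y) = F g x * F g y) ∧
      (∀ g h : Γ ≃g Γ, F (g.trans h) = (F g).trans (F h)) ∧
      (∀ φ : X ≃ₗ[k] X, (∀ x y : X, φ (x * y) = φ x * φ y) → ∃ g, F g = φ) ∧
      (∀ (g : Γ ≃g Γ) (v : V), F g (b (Sum.inl v)) = b (Sum.inl (g v))) ∧
      (∀ (g : Γ ≃g Γ) (e : Γ.edgeSet),
        F g (b (Sum.inr e)) = b (Sum.inr (g.mapEdgeSet e))) := by
  classical
  -- basic facts about edges
  have erep : ∀ e : Γ.edgeSet, ∃ u w : V, (e : Sym2 V) = s(u, w) := by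
    intro e; obtain ⟨⟨u, w⟩, h⟩ := Quot.exists_rep (e : Sym2 V); exact ⟨u, w, h.symm⟩
  have ene : ∀ (e : Γ.edgeSet) (u w : V), (e : Sym2 V) = s(u, w) → u ≠ w := by
    intro e u w h huw
    subst huw
    exact Γ.not_isDiag_of_mem_edgeSet e.2 (h ▸ Sym2.mk_isDiag_iff.mpr rfl)
  -- the "correction" part of the squares
  set c : V ⊕ Γ.edgeSet → X := Sum.elim
      (fun v => if v ∈ S then 0 else ∑ w ∈ S, b (Sum.inl w))
      (fun e => Sym2.lift ⟨fun u w => b (Sum.inl u) + b (Sum.inl w),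
        fun u w => add_comm _ _⟩ (e : Sym2 V)) with hcdef
  have hce : ∀ (e : Γ.edgeSet) (u w : V), (e : Sym2 V) = s(u, w) →
      c (Sum.inr e) = b (Sum.inl u) + b (Sum.inl w) := by
    intro e u w h
    simp [hcdef, h]
  have hcS : ∀ v ∈ S, c (Sum.inl v) = 0 := by intro v hv; simp [hcdef, hv]
  have hcNS : ∀ v ∉ S, c (Sum.inl v) = ∑ w ∈ S, b (Sum.inl w) := by
    intro v hv; simp [hcdef, hv]
  have hsq : ∀ p, b p * b p = b p + c p := by
    rintro (v | e)
    · by_cases hv : v ∈ S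
      · rw [hsq1 v hv, hcS v hv, add_zero]
      · rw [hsq2 v hv, hcNS v hv]
    · obtain ⟨u, w, h⟩ := erep e
      rw [hsq3 e u w h, hce e u w h, add_assoc]
  -- nilpotency of the correction operator
  have hNb : ∀ p, b.constr (M' := X) k c (b p) = c p := fun p => b.constr_basis k c p
  have hNcl : ∀ v : V, b.constr (M' := X) k c (c (Sum.inl v)) = 0 := by
    intro v
    by_cases hv : v ∈ S
    · rw [hcS v hv, map_zero]
    · rw [hcNS v hv, map_sum]
      refine Finset.sum_eq_zero fun w hw => ?_
      rw [hNb, hcS w hw]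
  have hN3 : (b.constr k c : Module.End k X) * b.constr k c * b.constr k c = 0 := by
    refine b.ext fun p => ?_
    show b.constr k c (b.constr k c (b.constr k c (b p))) = (0 : Module.End k X) (b p)
    rw [LinearMap.zero_apply, hNb]
    rcases p with v | e
    · rw [hNcl, map_zero]
    · obtain ⟨u, w, h⟩ := erep e
      rw [hce e u w h, map_add, hNb, hNb, map_add, hNcl, hNcl, add_zero]
  -- support facts for c
  have hc_self : ∀ q, b.repr (c q) q = 0 := by
    rintro (v | e)
    · by_cases hv : v ∈ S
      · rw [hcS v hv]; simp
      · rw [hcNS v hv, map_sum]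
        simp only [Module.Basis.repr_self, Finsupp.coe_finset_sum, Finset.sum_apply]
        refine Finset.sum_eq_zero fun w hw => ?_
        rw [Finsupp.single_apply]
        simp only [Sum.inl.injEq, ite_eq_right_iff]
        intro h; exact absurd (h ▸ hw) hv
    · obtain ⟨u, w, h⟩ := erep e
      rw [hce e u w h, map_add]
      simp [Module.Basis.repr_self, Finsupp.single_apply]
  have hc_inr : ∀ q (e' : Γ.edgeSet), b.repr (c q) (Sum.inr e') = 0 := by
    rintro (v | e) e'
    · by_cases hv : v ∈ S
      · rw [hcS v hv]; simp
      · rw [hcNS v hv, map_sum]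
        simp [Module.Basis.repr_self, Finsupp.single_apply]
    · obtain ⟨u, w, h⟩ := erep e
      rw [hce e u w h, map_add]
      simp [Module.Basis.repr_self, Finsupp.single_apply]
  -- Part 1 : span of products is everything
  constructor
  · set P := Submodule.span k {z : X | ∃ x y : X, z = x * y} with hP
    have hsqmem : ∀ p, b p * b p ∈ P := fun p => Submodule.subset_span ⟨b p, b p, rfl⟩
    have h1 : ∀ w ∈ S, b (Sum.inl w) ∈ P := by
      intro w hw
      have := hsqmem (Sum.inl w)
      rwa [hsq1 w hw] at this
    have hsum : (∑ w ∈ S, b (Sum.inl w)) ∈ P := Submodule.sum_mem _ fun w hw => h1 w hw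
    have h2 : ∀ v : V, b (Sum.inl v) ∈ P := by
      intro v
      by_cases hv : v ∈ S
      · exact h1 v hv
      · have hm := hsqmem (Sum.inl v)
        rw [hsq2 v hv] at hm
        have := Submodule.sub_mem P hm hsum
        simpa using this
    have h3 : ∀ e : Γ.edgeSet, b (Sum.inr e) ∈ P := by
      intro e
      obtain ⟨u, w, h⟩ := erep e
      have hm := hsqmem (Sum.inr e)
      rw [hsq3 e u w h] at hm
      have := Submodule.sub_mem P (Submodule.sub_mem P hm (h2 w)) (h2 u)
      simpa using this
    rw [eq_top_iff, ← b.span_eq]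
    refine Submodule.span_le.mpr ?_
    rintro _ ⟨p, rfl⟩
    rcases p with v | e
    · exact h2 v
    · exact h3 e
  -- Part 2 : the isomorphism
  · set σf : (Γ ≃g Γ) → (V ⊕ Γ.edgeSet ≃ V ⊕ Γ.edgeSet) :=
      fun g => Equiv.sumCongr g.toEquiv g.mapEdgeSet with hσf
    set F : (Γ ≃g Γ) → (X ≃ₗ[k] X) := fun g => b.equiv b (σf g) with hF
    have hFb : ∀ g p, F g (b p) = b (σf g p) := fun g p => b.equiv_apply p b (σf g)
    have hFv : ∀ (g : Γ ≃g Γ) (v : V), F g (b (Sum.inl v)) = b (Sum.inl (g v)) :=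
      fun g v => hFb g (Sum.inl v)
    have hFe : ∀ (g : Γ ≃g Γ) (e : Γ.edgeSet),
        F g (b (Sum.inr e)) = b (Sum.inr (g.mapEdgeSet e)) :=
      fun g e => hFb g (Sum.inr e)
    have hmap : ∀ (g : Γ ≃g Γ) (e : Γ.edgeSet) (u w : V), (e : Sym2 V) = s(u, w) →
        ((g.mapEdgeSet e : Γ.edgeSet) : Sym2 V) = s(g u, g w) := by
      intro g e u w h
      simp [SimpleGraph.Iso.mapEdgeSet, h]
    refine ⟨F, ?_, ?_, ?_, ?_, hFv, hFe⟩
    -- injectivity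
    · intro g h hgh
      have hv : ∀ v : V, g v = h v := by
        intro v
        have hthis : F g (b (Sum.inl v)) = F h (b (Sum.inl v)) := by rw [hgh]
        rw [hFv g v, hFv h v] at hthis
        exact Sum.inl_injective (b.injective hthis)
      ext v
      exact hv v
    -- multiplicativity
    · intro g x y
      have hbasis : ∀ p q, F g (b p * b q) = F g (b p) * F g (b q) := by
        intro p q
        by_cases hpq : p = q
        · subst hpq
          rw [hFb]
          rcases p with v | e
          · by_cases hv : v ∈ S
            · rw [hsq1 v hv, hFv]
              have : σf g (Sum.inl v) = Sum.inl (g v) := rfl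
              rw [this, hsq1 (g v) (hSinv g v hv)]
            · have hgv : g v ∉ S := by
                intro hgvS
                have := hSinv g.symm (g v) hgvS
                rw [RelIso.symm_apply_apply] at this
                exact hv this
              have : σf g (Sum.inl v) = Sum.inl (g v) := rfl
              rw [this, hsq2 v hv, hsq2 (g v) hgv, map_add, hFv, map_sum]
              congr 1
              refine Finset.sum_nbij' (fun w => g w) (fun w => g.symm w)
                (fun w hw => hSinv g w hw) (fun w hw => hSinv g.symm w hw)
                (fun w _ => by simp) (fun w _ => by simp) (fun w _ => ?_)
              rw [hFv]
          · obtain ⟨u, w, h⟩ := erep e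
            have : σf g (Sum.inr e) = Sum.inr (g.mapEdgeSet e) := rfl
            rw [this, hsq3 e u w h, hsq3 (g.mapEdgeSet e) (g u) (g w) (hmap g e u w h),
              map_add, map_add, hFe, hFv, hFv]
        · rw [hnat p q hpq, map_zero, hFb, hFb, hnat _ _ (fun hc => hpq ((σf g).injective hc))]
      have := LinearMap.ext_basis b b (B := (LinearMap.mul k X).compr₂ (F g).toLinearMap)
        (B' := (LinearMap.mul k X).compl₁₂ (F g).toLinearMap (F g).toLinearMap)
        (fun p q => by
          simpa using hbasis p q)
      have := LinearMap.congr_fun (LinearMap.congr_fun this x) y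
      simpa using this
    -- compatibility with composition
    · intro g h
      apply LinearEquiv.toLinearMap_injective
      refine b.ext fun p => ?_
      show F (g.trans h) (b p) = F h (F g (b p))
      rw [hFb, hFb, hFb]
      congr 1
      rcases p with v | e
      · rfl
      · show Sum.inr (SimpleGraph.Iso.mapEdgeSet (g.trans h) e) =
          Sum.inr (h.mapEdgeSet (g.mapEdgeSet e))
        congr 1
        apply Subtype.ext
        simp [SimpleGraph.Iso.mapEdgeSet, Sym2.map_map]
    -- surjectivity
    · intro φ hφ
      obtain ⟨π, a, ha, hφb⟩ := perm_basis' b hnat c hsq hN3 φ hφ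
      -- the master equation
      have Eq1 : ∀ p, a p • b (π p) + φ (c p) =
          (a p * a p) • b (π p) + (a p * a p) • c (π p) := by
        intro p
        have h1 : φ (b p * b p) = φ (b p) * φ (b p) := hφ _ _
        rw [hsq p, map_add, hφb p, smul_mul_smul_comm, hsq (π p), smul_add] at h1
        exact h1
      have hrb : ∀ (t : k) (q q' : V ⊕ Γ.edgeSet), b.repr (t • b q) q' = if q = q' then t else 0 := by
        intro t q q'
        rw [map_smul, Module.Basis.repr_self, Finsupp.smul_apply, Finsupp.single_apply]
        split <;> simp
      have hrbb : ∀ (q q' : V ⊕ Γ.edgeSet), b.repr (b q) q' = if q = q' then 1 else 0 := by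
        intro q q'
        rw [Module.Basis.repr_self, Finsupp.single_apply]
      have edgeEq : ∀ (e : Γ.edgeSet) (u w : V), (e : Sym2 V) = s(u, w) →
          a (Sum.inr e) = 1 ∧
          a (Sum.inl u) • b (π (Sum.inl u)) + a (Sum.inl w) • b (π (Sum.inl w)) =
            c (π (Sum.inr e)) := by
        intro e u w he
        have E := Eq1 (Sum.inr e)
        rw [hce e u w he, map_add, hφb, hφb] at E
        have hae : a (Sum.inr e) = 1 := by
          have hE := congrArg (fun z => b.repr z (π (Sum.inr e))) E
          have hr2 : b.repr ((a (Sum.inr e) * a (Sum.inr e)) • c (π (Sum.inr e))) (π (Sum.inr e)) = 0 := by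
            rw [map_smul, Finsupp.smul_apply, hc_self, smul_zero]
          simp only [map_add, Finsupp.add_apply, hrb, hr2, add_zero] at hE
          simp only [if_true, EmbeddingLike.apply_eq_iff_eq, reduceCtorEq, if_false,
            add_zero, zero_add] at hE
          -- hE : a (inr e) = a (inr e) * a (inr e)
          have := mul_left_cancel₀ (ha (Sum.inr e)) (show a (Sum.inr e) * 1 =
            a (Sum.inr e) * a (Sum.inr e) by rw [mul_one, ← hE])
          exact this.symm
        constructor
        · exact hae
        · rw [hae] at E
          simp only [one_mul, one_smul] at E
          exact add_left_cancel E
      have hedge_at : ∀ v : V, ∃ (e : Γ.edgeSet) (w : V), (e : Sym2 V) = s(v, w) := by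
        intro v
        have h0 : 0 < (Γ.neighborFinset v).card := lt_of_lt_of_le (by norm_num) (hdeg v)
        obtain ⟨w, hw⟩ := Finset.card_pos.mp h0
        exact ⟨⟨s(v, w), (Γ.mem_neighborFinset v w).mp hw⟩, w, rfl⟩
      have hvv : ∀ v : V, ∃ v', π (Sum.inl v) = Sum.inl v' := by
        intro v
        obtain ⟨e, w, he⟩ := hedge_at v
        obtain ⟨-, hE⟩ := edgeEq e v w he
        rcases hπv : π (Sum.inl v) with v' | e'
        · exact ⟨v', rfl⟩
        · exfalso
          have hne : π (Sum.inl w) ≠ Sum.inr e' := by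
            intro h
            exact (ene e v w he) ((Sum.inl_injective (π.injective (h.trans hπv.symm))).symm)
          have h1 := congrArg (fun z => b.repr z (Sum.inr e')) hE
          simp only [map_add, Finsupp.add_apply, hrb, hc_inr, hπv, if_pos rfl,
            if_neg hne, add_zero] at h1
          exact ha (Sum.inl v) h1
      choose ρ hρ using hvv
      have hρinj : Function.Injective ρ := by
        intro u v h
        have : π (Sum.inl u) = π (Sum.inl v) := by rw [hρ u, hρ v, h]
        exact Sum.inl_injective (π.injective this)
      have hρbij := Finite.injective_iff_bijective.mp hρinj
      have hee : ∀ e : Γ.edgeSet, ∃ e', π (Sum.inr e) = Sum.inr e' := by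
        intro e
        rcases hπe : π (Sum.inr e) with v' | e'
        · exfalso
          obtain ⟨v, rfl⟩ := hρbij.surjective v'
          have : π (Sum.inl v) = π (Sum.inr e) := by rw [hρ v, hπe]
          exact absurd (π.injective this) (by simp)
        · exact ⟨e', rfl⟩
      choose τ hτ using hee
      have key2 : ∀ (e : Γ.edgeSet) (u w : V), (e : Sym2 V) = s(u, w) →
          a (Sum.inl u) = 1 ∧ s(ρ u, ρ w) = ((τ e : Γ.edgeSet) : Sym2 V) := by
        intro e u w he
        obtain ⟨-, hE⟩ := edgeEq e u w he
        rw [hρ u, hρ w, hτ e] at hE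
        obtain ⟨u', w', he'⟩ := erep (τ e)
        rw [hce _ u' w' he'] at hE
        have hu'w' : u' ≠ w' := ene _ _ _ he'
        have hρuw : ρ u ≠ ρ w := fun h => (ene e u w he) (hρinj h)
        have h1 := congrArg (fun z => b.repr z (Sum.inl (ρ u))) hE
        have h2 := congrArg (fun z => b.repr z (Sum.inl (ρ w))) hE
        simp only [map_add, Finsupp.add_apply, hrb, hrbb, Sum.inl.injEq] at h1 h2
        rw [if_true, if_neg (Ne.symm hρuw), add_zero] at h1
        rw [if_true, if_neg hρuw, zero_add] at h2
        by_cases c1 : u' = ρ u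
        · have c2 : ¬ (w' = ρ u) := fun h => hu'w' (by rw [c1, h])
          rw [if_pos c1, if_neg c2, add_zero] at h1
          have c3 : ¬ (u' = ρ w) := fun h => hρuw (by rw [← c1, h])
          by_cases c4 : w' = ρ w
          · exact ⟨h1, by rw [he', c1, c4]⟩
          · exfalso
            rw [if_neg c3, if_neg c4, add_zero] at h2
            exact ha _ h2
        · have c2 : w' = ρ u := by
            by_contra c2
            rw [if_neg c1, if_neg c2, add_zero] at h1
            exact ha _ h1
          have c3 : ¬ (w' = ρ w) := fun h => hρuw (by rw [← c2, h])
          have c4 : u' = ρ w := by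
            by_contra c4
            rw [if_neg c4, if_neg c3, add_zero] at h2
            exact ha _ h2
          rw [if_neg c1, if_pos c2, zero_add] at h1
          refine ⟨h1, ?_⟩
          rw [he', c2, c4]
          exact Sym2.eq_swap
      have hadjρ : ∀ u w, Γ.Adj u w → Γ.Adj (ρ u) (ρ w) := by
        intro u w h
        obtain ⟨-, h2⟩ := key2 ⟨s(u, w), h⟩ u w rfl
        have hm := (τ ⟨s(u, w), h⟩).2
        rw [← h2] at hm
        exact hm
      set fperm : Equiv.Perm V := Equiv.ofBijective ρ hρbij with hfperm
      have hfx : ∀ x, fperm x = ρ x := fun x => rfl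
      have hpow : ∀ (n : ℕ) (u w : V), Γ.Adj u w → Γ.Adj ((fperm ^ n) u) ((fperm ^ n) w) := by
        intro n
        induction n with
        | zero => intro u w h; simpa using h
        | succ n ih =>
          intro u w h
          have hs : ∀ x, (fperm ^ (n + 1)) x = (fperm ^ n) (fperm x) := by
            intro x; rw [pow_succ]; rfl
          rw [hs, hs]
          exact ih _ _ (by rw [hfx, hfx]; exact hadjρ u w h)
      have hrev : ∀ u w, Γ.Adj (ρ u) (ρ w) → Γ.Adj u w := by
        intro u w h
        have hn : 0 < orderOf fperm := orderOf_pos fperm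
        have heq : ∀ x : V, (fperm ^ (orderOf fperm - 1)) (ρ x) = x := by
          intro x
          have hx : (fperm ^ (orderOf fperm - 1)) (ρ x) =
              ((fperm ^ (orderOf fperm - 1)) * fperm) x := rfl
          rw [hx, ← pow_succ, Nat.sub_add_cancel hn, pow_orderOf_eq_one]
          rfl
        have := hpow (orderOf fperm - 1) _ _ h
        rwa [heq, heq] at this
      set g : Γ ≃g Γ := RelIso.mk fperm
        (by intro u w; exact ⟨fun h => hrev u w h, fun h => hadjρ u w h⟩) with hg
      have hgx : ∀ x, g x = ρ x := fun x => rfl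
      refine ⟨g, ?_⟩
      have hav : ∀ v : V, a (Sum.inl v) = 1 := by
        intro v
        obtain ⟨e, w, he⟩ := hedge_at v
        exact (key2 e v w he).1
      have hmapg : ∀ e, SimpleGraph.Iso.mapEdgeSet g e = τ e := by
        intro e
        obtain ⟨u, w, he⟩ := erep e
        apply Subtype.ext
        rw [hmap g e u w he, ← (key2 e u w he).2, hgx, hgx]
      apply LinearEquiv.toLinearMap_injective
      refine b.ext fun p => ?_
      show F g (b p) = φ (b p)
      rw [hFb, hφb]
      rcases p with v | e
      · rw [hav v, one_smul, hρ v]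
        rfl
      · obtain ⟨u, w, he⟩ := erep e
        rw [(edgeEq e u w he).1, one_smul, hτ e]
        show b (Sum.inr (SimpleGraph.Iso.mapEdgeSet g e)) = b (Sum.inr (τ e))
        rw [hmapg e]
end

section
/- In the graph-based evolution algebra X of the construction (b_v² = b_v for v ∈ V, b_v² = b_v + Σ_{w∈V} b_w for v ∉ V with |V| = r, b_e² = b_e + b_u + b_w for edges e = {u,w}), the set of idempotent natural elements of X is exactly {b_v : v ∈ V}, provided r ≠ 2 or every vertex of the graph has degree at least 2. -/
/-- In a natural basis, `x * b i` only sees the `i`-th coordinate of `x`. -/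
lemma mul_natural_basis {k X I : Type*} [Field k] [NonUnitalNonAssocCommRing X]
    [Module k X] [SMulCommClass k X X] [IsScalarTower k X X]
    (b : Module.Basis I k X) (hnat : ∀ p q : I, p ≠ q → b p * b q = 0)
    (x : X) (i : I) : x * b i = b.repr x i • (b i * b i) := by
  conv_lhs => rw [← b.linearCombination_repr x]
  rw [Finsupp.linearCombination_apply, Finsupp.sum_mul, Finsupp.sum]
  rw [Finset.sum_eq_single i]
  · rw [smul_mul_assoc]
  · intro j _ hj
    rw [smul_mul_assoc, hnat j i hj, smul_zero]
  · intro hi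
    rw [Finsupp.notMem_support_iff.mp hi, zero_smul, zero_mul]

lemma scale_of_smul_eq {k X : Type*} [Field k] [AddCommGroup X] [Module k X]
    {a t : k} {y x : X} (h : a • y = t • x) (ha : a ≠ 0) (hy : y ≠ 0) :
    ∃ s : k, s ≠ 0 ∧ x = s • y := by
  have ht : t ≠ 0 := by
    rintro rfl
    rw [zero_smul] at h
    rcases smul_eq_zero.mp h with h' | h'
    · exact ha h'
    · exact hy h'
  refine ⟨t⁻¹ * a, mul_ne_zero (inv_ne_zero ht) ha, ?_⟩
  rw [mul_smul, h, smul_smul, inv_mul_cancel₀ ht, one_smul]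

/-- In the graph-based evolution algebra `X` (squares `b_v² = b_v` for `v ∈ S`,
`b_v² = b_v + ∑_{w ∈ S} b_w` for `v ∉ S`, `b_e² = b_e + b_u + b_w` for edges
`e = {u,w}`), provided `|S| ≠ 2` or every vertex has degree at least 2, the set of
idempotent natural elements of `X` is exactly `{b_v : v ∈ S}`. -/
theorem stmt18 {k X : Type*} [Field k] [NonUnitalNonAssocCommRing X]
    [Module k X] [SMulCommClass k X X] [IsScalarTower k X X]
    {V : Type*} [Fintype V] [DecidableEq V]
    (Γ : SimpleGraph V) [DecidableRel Γ.Adj]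
    (S : Finset V) (hS : S.Nonempty)
    (b : Module.Basis (V ⊕ Γ.edgeSet) k X)
    (hnat : ∀ p q : V ⊕ Γ.edgeSet, p ≠ q → b p * b q = 0)
    (hsq1 : ∀ v ∈ S, b (Sum.inl v) * b (Sum.inl v) = b (Sum.inl v))
    (hsq2 : ∀ v ∉ S, b (Sum.inl v) * b (Sum.inl v) =
      b (Sum.inl v) + ∑ w ∈ S, b (Sum.inl w))
    (hsq3 : ∀ (e : Γ.edgeSet) (u w : V), (e : Sym2 V) = s(u, w) →
      b (Sum.inr e) * b (Sum.inr e) = b (Sum.inr e) + b (Sum.inl u) + b (Sum.inl w))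
    (hcase : S.card ≠ 2 ∨ ∀ v : V, 2 ≤ Γ.degree v) :
    {x : X | x * x = x ∧ ∃ c : Module.Basis (V ⊕ Γ.edgeSet) k X,
        (∀ p q : V ⊕ Γ.edgeSet, p ≠ q → c p * c q = 0) ∧ x ∈ Set.range c} =
      (fun v => b (Sum.inl v)) '' ↑S := by
  ext x
  simp only [Set.mem_setOf_eq, Set.mem_image, Finset.mem_coe]
  constructor
  · rintro ⟨hx, c, hc, p, rfl⟩
    have hx0 : c p ≠ 0 := c.ne_zero p
    have key : ∀ i, b.repr (c p) i • (b i * b i) = c.repr (b i) p • c p := by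
      intro i
      rw [← mul_natural_basis b hnat (c p) i, mul_comm, mul_natural_basis c hc (b i) p, hx]
    have hrepr : ∀ (u : V) (T : Finset V),
        b.repr (∑ w ∈ T, b (Sum.inl w)) (Sum.inl u) = if u ∈ T then 1 else 0 := by
      intro u T
      rw [map_sum, Finsupp.finset_sum_apply]
      simp_rw [Module.Basis.repr_self, Finsupp.single_apply, Sum.inl.injEq]
      exact Finset.sum_ite_eq' T u (fun _ => 1)
    by_cases h1 : ∃ v ∈ S, b.repr (c p) (Sum.inl v) ≠ 0
    · -- the coefficient of some b_v, v ∈ S, is nonzero; then x = b_v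
      obtain ⟨v, hv, hl⟩ := h1
      have hk := key (Sum.inl v)
      rw [hsq1 v hv] at hk
      obtain ⟨s, hs, hxe⟩ := scale_of_smul_eq hk hl (b.ne_zero _)
      have hsq : (s * s) • b (Sum.inl v) = s • b (Sum.inl v) := by
        have h' : (s • b (Sum.inl v)) * (s • b (Sum.inl v)) = s • b (Sum.inl v) := by
          rw [← hxe]; exact hx
        rwa [smul_mul_assoc, mul_smul_comm, hsq1 v hv, smul_smul] at h'
      have hss : s * s = s := by
        have h0 : (s * s - s) • b (Sum.inl v) = 0 := by rw [sub_smul, hsq, sub_self]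
        rcases smul_eq_zero.mp h0 with h' | h'
        · exact sub_eq_zero.mp h'
        · exact absurd h' (b.ne_zero _)
      have hs1 : s = 1 := by
        have : s * (s - 1) = 0 := by ring_nf; linear_combination hss
        rcases mul_eq_zero.mp this with h' | h'
        · exact absurd h' hs
        · exact sub_eq_zero.mp h'
      exact ⟨v, hv, by rw [hxe, hs1, one_smul]⟩
    · push_neg at h1
      by_cases h2 : ∃ v : V, b.repr (c p) (Sum.inl v) ≠ 0
      · -- a coefficient of b_v with v ∉ S is nonzero: contradiction
        obtain ⟨v, hl⟩ := h2
        have hvS : v ∉ S := fun h => hl (h1 v h)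
        have hk := key (Sum.inl v)
        rw [hsq2 v hvS] at hk
        set y : X := b (Sum.inl v) + ∑ w ∈ S, b (Sum.inl w) with hy
        have hyv : ∀ u : V, b.repr y (Sum.inl u) =
            (if u = v then 1 else 0) + (if u ∈ S then 1 else 0) := by
          intro u
          rw [hy, map_add, Finsupp.add_apply, hrepr, Module.Basis.repr_self,
            Finsupp.single_apply]
          simp [eq_comm]
        have hyne : y ≠ 0 := by
          intro h0
          have := hyv v
          rw [h0] at this
          simp [hvS] at this
        obtain ⟨s, hs, hxe⟩ := scale_of_smul_eq hk hl hyne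
        -- compute y * y
        have hvS' : ∀ w ∈ S, Sum.inl v ≠ (Sum.inl w : V ⊕ Γ.edgeSet) := by
          intro w hw h'
          exact hvS (by rw [Sum.inl.inj h']; exact hw)
        have hyy : y * y = y + ∑ w ∈ S, b (Sum.inl w) := by
          rw [hy, add_mul, mul_add, mul_add]
          have h2 : b (Sum.inl v) * ∑ w ∈ S, b (Sum.inl w) = 0 := by
            rw [Finset.mul_sum]
            exact Finset.sum_eq_zero fun w hw => hnat _ _ (hvS' w hw)
          have h3 : (∑ w ∈ S, b (Sum.inl w)) * b (Sum.inl v) = 0 := by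
            rw [Finset.sum_mul]
            exact Finset.sum_eq_zero fun w hw => hnat _ _ (hvS' w hw).symm
          have h4 : (∑ w ∈ S, b (Sum.inl w)) * (∑ w ∈ S, b (Sum.inl w)) =
              ∑ w ∈ S, b (Sum.inl w) := by
            rw [Finset.sum_mul]
            refine Finset.sum_congr rfl fun w hw => ?_
            rw [Finset.mul_sum, Finset.sum_eq_single w]
            · exact hsq1 w hw
            · intro w' hw' hne
              exact hnat _ _ (fun h => hne (Sum.inl.inj h).symm)
            · intro h; exact absurd hw h
          rw [hsq2 v hvS, h2, h3, h4]
          abel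
        have hidem : (s * s) • (y + ∑ w ∈ S, b (Sum.inl w)) = s • y := by
          have h' : (s • y) * (s • y) = s • y := by rw [← hxe]; exact hx
          rwa [smul_mul_assoc, mul_smul_comm, hyy, smul_smul] at h'
        have coordv : s * s = s := by
          have := congrArg (fun z => b.repr z (Sum.inl v)) hidem
          simp only [map_smul, Finsupp.smul_apply, smul_eq_mul, map_add,
            Finsupp.add_apply, hyv v, hrepr v S] at this
          simpa [hvS] using this
        obtain ⟨w₀, hw₀⟩ := hS
        have hw₀v : w₀ ≠ v := fun h => hvS (h ▸ hw₀)
        have coordw : s * s * 2 = s := by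
          have := congrArg (fun z => b.repr z (Sum.inl w₀)) hidem
          simp only [map_smul, Finsupp.smul_apply, smul_eq_mul, map_add,
            Finsupp.add_apply, hyv w₀, hrepr w₀ S] at this
          simp only [hw₀v, hw₀, if_true, if_false] at this
          linear_combination this
        have hs1 : s = 1 := by
          have : s * (s - 1) = 0 := by linear_combination coordv
          rcases mul_eq_zero.mp this with h' | h'
          · exact absurd h' hs
          · exact sub_eq_zero.mp h'
        rw [hs1] at coordw
        have h10 : (1 : k) = 0 := by linear_combination coordw
        exact absurd h10 one_ne_zero
      · push_neg at h2
        by_cases h3 : ∃ e : Γ.edgeSet, b.repr (c p) (Sum.inr e) ≠ 0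
        · -- an edge coefficient is nonzero: contradiction
          obtain ⟨e, hl⟩ := h3
          obtain ⟨⟨u, w⟩, he⟩ := Quot.exists_rep (e : Sym2 V)
          have hadj : Γ.Adj u w := by
            have h' := e.2
            rw [← he] at h'
            exact h'
          have hne : u ≠ w := hadj.ne
          have hk := key (Sum.inr e)
          rw [hsq3 e u w he.symm] at hk
          set y : X := b (Sum.inr e) + b (Sum.inl u) + b (Sum.inl w) with hy
          have hyu : b.repr y (Sum.inl u) = 1 := by
            rw [hy, map_add, map_add, Finsupp.add_apply, Finsupp.add_apply]
            simp only [Module.Basis.repr_self, Finsupp.single_apply]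
            simp [hne.symm]
          have hyne : y ≠ 0 := by
            intro h0; rw [h0] at hyu; simp at hyu
          obtain ⟨s, hs, hxe⟩ := scale_of_smul_eq hk hl hyne
          have : b.repr (c p) (Sum.inl u) = s := by
            rw [hxe, map_smul, Finsupp.smul_apply, hyu, smul_eq_mul, mul_one]
          rw [h2 u] at this
          exact absurd this.symm hs
        · push_neg at h3
          have hall : ∀ i, b.repr (c p) i = 0 := by
            rintro (v | e)
            · exact h2 v
            · exact h3 e
          have : c p = 0 := by
            apply (Module.Basis.forall_coord_eq_zero_iff b).mp
            intro i
            rw [Module.Basis.coord_apply]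
            exact hall i
          exact absurd this hx0
  · rintro ⟨v, hv, rfl⟩
    exact ⟨hsq1 v hv, b, hnat, Sum.inl v, rfl⟩
end
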